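/- arXiv:1312.5589 — 11 statements merged into one kernel-verified Lean document; each statement's English description precedes it below -/
import Mathlib

section
/- Let S be a partially ordered monoid (pomonoid) and A a right S-poset. An S-act congruence ρ on A is an S-poset congruence (i.e., A/ρ admits a partial order making the quotient map an S-poset morphism) if and only if for all a,b ∈ A, a ≤_ρ b and b ≤_ρ a together imply a ρ b, where a ≤_ρ b means there exist n ≥ 1 and a₁,a₁',…,aₙ,aₙ' ∈ A with a ≤ a₁ ρ a₁' ≤ a₂ ρ a₂' ≤ ⋯ ≤ aₙ ρ aₙ' ≤ b. -/
universe u v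

/-- A pomonoid: the partial order is compatible with multiplication on both sides. -/
def IsPomonoid (S : Type*) [Monoid S] [PartialOrder S] : Prop :=
  ∀ ⦃a b : S⦄, a ≤ b → ∀ c : S, a * c ≤ b * c ∧ c * a ≤ c * b

/-- A right `S`-poset structure on `A` given by the action `act`. -/
structure IsRightSPoset (S A : Type*) [Monoid S] [PartialOrder S] [PartialOrder A]
    (act : A → S → A) : Prop where
  act_one : ∀ a, act a 1 = a
  act_mul : ∀ a s t, act a (s * t) = act (act a s) t
  mono_act : ∀ {a b : A} (s : S), a ≤ b → act a s ≤ act b s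
  act_mono : ∀ (a : A) {s t : S}, s ≤ t → act a s ≤ act a t

/-- A left `S`-poset structure on `A` given by the action `act`. -/
structure IsLeftSPoset (S A : Type*) [Monoid S] [PartialOrder S] [PartialOrder A]
    (act : S → A → A) : Prop where
  one_act : ∀ a, act 1 a = a
  mul_act : ∀ s t a, act (s * t) a = act s (act t a)
  mono_act : ∀ {a b : A} (s : S), a ≤ b → act s a ≤ act s b
  act_mono : ∀ (a : A) {s t : S}, s ≤ t → act s a ≤ act t a

/-- The scheme relation defining the order on the tensor product `X ⊗_U Y`, at the level of
representatives: `TLe leX leY aX aY (x, y) (x', y')` holds precisely when there is a finite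
scheme `x ≤ x₁s₁`, `s₁y ≤ t₁y₂`, `x₁t₁ ≤ x₂s₂`, `s₂y₂ ≤ t₂y₃`, …, `sₙyₙ ≤ tₙy'`,
`xₙtₙ ≤ x'`. -/
inductive TLe {U X Y : Type*} (leX : X → X → Prop) (leY : Y → Y → Prop)
    (aX : X → U → X) (aY : U → Y → Y) : X × Y → X × Y → Prop
  | base : ∀ (p q : X × Y) (x₁ : X) (s t : U),
      leX p.1 (aX x₁ s) → leY (aY s p.2) (aY t q.2) → leX (aX x₁ t) q.1 →
      TLe leX leY aX aY p q
  | step : ∀ (p q : X × Y) (x₁ : X) (s t : U) (y₂ : Y),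
      leX p.1 (aX x₁ s) → leY (aY s p.2) (aY t y₂) →
      TLe leX leY aX aY (aX x₁ t, y₂) q → TLe leX leY aX aY p q

/-- Equality of two representatives in the tensor product. -/
def TEquiv {U X Y : Type*} (leX : X → X → Prop) (leY : Y → Y → Prop)
    (aX : X → U → X) (aY : U → Y → Y) (p q : X × Y) : Prop :=
  TLe leX leY aX aY p q ∧ TLe leX leY aX aY q p

/-- The order induced on a quotient by a relation `le` on representatives. -/
def QuotLe {α : Type*} (r : α → α → Prop) (le : α → α → Prop) (x y : Quot r) : Prop :=
  ∃ p q : α, Quot.mk r p = x ∧ Quot.mk r q = y ∧ le p q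

/-- `ChainLe le ρ a b` expresses `a ≤ a₁ ρ a₁' ≤ a₂ ρ a₂' ≤ ⋯ ≤ aₙ ρ aₙ' ≤ b`. -/
inductive ChainLe {F : Type*} (le ρ : F → F → Prop) : F → F → Prop
  | base : ∀ {a b : F}, le a b → ChainLe le ρ a b
  | step : ∀ {a b : F} (d d' : F), le a d → ρ d d' → ChainLe le ρ d' b → ChainLe le ρ a b

/-- The relation `α(R)` induced by `R` on a right `S`-act:
`a α(R) b` iff `a = b` or `a = x₁s₁`, `x₁'s₁ = x₂s₂`, …, `xₙ'sₙ = b` with `(xᵢ, xᵢ') ∈ R`. -/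
inductive AlphaRel {S F : Type*} (act : F → S → F) (R : F → F → Prop) : F → F → Prop
  | refl : ∀ a, AlphaRel act R a a
  | step : ∀ (x x' : F) (s : S) (b : F), R x x' → AlphaRel act R (act x' s) b →
      AlphaRel act R (act x s) b


/-!
The relation `≤_ρ` is the preorder on `A` generated by `≤` and `ρ`; it respects `ρ` and the
action, so it descends to a preorder on `A/ρ` for which the quotient map and the induced action
are monotone. Any order on `A/ρ` making the quotient map monotone contains the image of `≤_ρ`, so
antisymmetry there forces `a ≤_ρ b ≤_ρ a → a ρ b`; conversely, that condition is exactly the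
antisymmetry of the descended preorder.
-/

namespace ChainLe

variable {F : Type*}

theorem trans_of_rel {le ρ : F → F → Prop} {a b b' c : F}
    (hab : ChainLe le ρ a b) (hb : ρ b b') (hbc : ChainLe le ρ b' c) : ChainLe le ρ a c := by
  induction hab with
  | base h => exact step _ _ h hb hbc
  | step d d' hle hρ _ ih => exact step d d' hle hρ (ih hb)

theorem map {G : Type*} {le ρ : F → F → Prop} {le' ρ' : G → G → Prop} {f : F → G}
    (hle : ∀ a b, le a b → le' (f a) (f b)) (hρ : ∀ a b, ρ a b → ρ' (f a) (f b)) {a b : F}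
    (h : ChainLe le ρ a b) : ChainLe le' ρ' (f a) (f b) := by
  induction h with
  | base h => exact base (hle _ _ h)
  | step d d' hd hdd' _ ih => exact step (f d) (f d') (hle _ _ hd) (hρ _ _ hdd') ih

theorem le_of_map {B : Type*} [Preorder B] {le ρ : F → F → Prop} {g : F → B}
    (hle : ∀ a b, le a b → g a ≤ g b) (hρ : ∀ a b, ρ a b → g a = g b) {a b : F}
    (h : ChainLe le ρ a b) : g a ≤ g b := by
  induction h with
  | base h => exact hle _ _ h
  | step d d' hd hdd' _ ih => exact (hle _ _ hd).trans ((hρ _ _ hdd').le.trans ih)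

variable [Preorder F] {ρ : Setoid F}

theorem refl (a : F) : ChainLe (· ≤ ·) ρ a a :=
  base le_rfl

theorem trans {a b c : F} (hab : ChainLe (· ≤ ·) ρ a b) (hbc : ChainLe (· ≤ ·) ρ b c) :
    ChainLe (· ≤ ·) ρ a c :=
  hab.trans_of_rel (ρ.refl b) hbc

theorem congr {a a' b b' : F} (ha : ρ a a') (hb : ρ b b') :
    ChainLe (· ≤ ·) ρ a b ↔ ChainLe (· ≤ ·) ρ a' b' :=
  ⟨fun h => step a' a le_rfl (ρ.symm ha) (h.trans_of_rel hb (refl b')),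
    fun h => step a a' le_rfl ha (h.trans_of_rel (ρ.symm hb) (refl b))⟩

end ChainLe

section Quotient

variable {A : Type*} [Preorder A] {ρ : Setoid A}

def chainQuotientLe (ρ : Setoid A) : Quotient ρ → Quotient ρ → Prop :=
  Quotient.lift₂ (ChainLe (· ≤ ·) ρ) fun _ _ _ _ ha hb => propext (ChainLe.congr ha hb)

abbrev chainQuotientPartialOrder
    (hanti : ∀ a b, ChainLe (· ≤ ·) ρ a b → ChainLe (· ≤ ·) ρ b a → ρ a b) :
    PartialOrder (Quotient ρ) where
  le := chainQuotientLe ρ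
  lt x y := chainQuotientLe ρ x y ∧ ¬chainQuotientLe ρ y x
  lt_iff_le_not_ge _ _ := Iff.rfl
  le_refl := Quotient.ind ChainLe.refl
  le_trans := Quotient.ind fun _ => Quotient.ind fun _ => Quotient.ind fun _ => ChainLe.trans
  le_antisymm := Quotient.ind fun a => Quotient.ind fun b hab hba =>
    Quotient.sound (hanti a b hab hba)

end Quotient

section Action

variable {S A : Type*} {act : A → S → A} {ρ : Setoid A}

def quotientAct (hcong : ∀ a b s, ρ a b → ρ (act a s) (act b s)) (x : Quotient ρ) (s : S) :
    Quotient ρ :=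
  Quotient.map (act · s) (hcong · · s) x

theorem isRightSPoset_quotientAct [Monoid S] [PartialOrder S] [PartialOrder A]
    (hA : IsRightSPoset S A act) (hcong : ∀ a b s, ρ a b → ρ (act a s) (act b s))
    (hanti : ∀ a b, ChainLe (· ≤ ·) ρ a b → ChainLe (· ≤ ·) ρ b a → ρ a b) :
    @IsRightSPoset S (Quotient ρ) _ _ (chainQuotientPartialOrder hanti) (quotientAct hcong) :=
  @IsRightSPoset.mk _ _ _ _ (chainQuotientPartialOrder hanti) _
    (Quotient.ind fun a => congrArg (Quotient.mk ρ) (hA.act_one a))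
    (Quotient.ind fun a s t => congrArg (Quotient.mk ρ) (hA.act_mul a s t))
    (fun {x y} s => Quotient.inductionOn₂ x y fun _ _ =>
      ChainLe.map (f := (act · s)) (fun _ _ => hA.mono_act s) (fun a b => hcong a b s))
    (fun x _ _ hst => Quotient.inductionOn x fun a => ChainLe.base (hA.act_mono a hst))

end Action

theorem stmt_0_general {S A : Type u} [Monoid S] [PartialOrder S] [PartialOrder A]
    (act : A → S → A) (hA : IsRightSPoset S A act)
    (ρ : Setoid A) (hcong : ∀ a b s, ρ.r a b → ρ.r (act a s) (act b s)) :
    (∃ (po : PartialOrder (Quotient ρ)) (act' : Quotient ρ → S → Quotient ρ),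
      (∀ a s, act' (Quotient.mk ρ a) s = Quotient.mk ρ (act a s)) ∧
      @IsRightSPoset S (Quotient ρ) _ _ po act' ∧
      ∀ a b : A, a ≤ b → po.le (Quotient.mk ρ a) (Quotient.mk ρ b)) ↔
    ∀ a b : A, ChainLe (· ≤ ·) ρ.r a b → ChainLe (· ≤ ·) ρ.r b a → ρ.r a b := by
  constructor
  · rintro ⟨po, -, -, -, hmono⟩ a b hab hba
    have hmk : ∀ {x y : A}, ChainLe (· ≤ ·) ρ x y → po.le (Quotient.mk ρ x) (Quotient.mk ρ y) :=
      @ChainLe.le_of_map _ _ po.toPreorder _ _ _ hmono fun _ _ => Quotient.sound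
    exact Quotient.exact (po.le_antisymm _ _ (hmk hab) (hmk hba))
  · intro hanti
    exact ⟨chainQuotientPartialOrder hanti, quotientAct hcong, fun _ _ => rfl,
      isRightSPoset_quotientAct hA hcong hanti, fun _ _ => ChainLe.base⟩

/-- an `S`-act congruence `ρ` on a right `S`-poset `A` is an `S`-poset congruence
(i.e. `A/ρ` admits a partial order making it an `S`-poset and the quotient map an `S`-poset
morphism) iff `a ≤_ρ b` and `b ≤_ρ a` imply `a ρ b`. -/
theorem stmt_0 {S A : Type u} [Monoid S] [PartialOrder S] [PartialOrder A]
    (hS : IsPomonoid S) (act : A → S → A) (hA : IsRightSPoset S A act)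
    (ρ : Setoid A) (hcong : ∀ a b s, ρ.r a b → ρ.r (act a s) (act b s)) :
    (∃ (po : PartialOrder (Quotient ρ)) (act' : Quotient ρ → S → Quotient ρ),
      (∀ a s, act' (Quotient.mk ρ a) s = Quotient.mk ρ (act a s)) ∧
      @IsRightSPoset S (Quotient ρ) _ _ po act' ∧
      ∀ a b : A, a ≤ b → po.le (Quotient.mk ρ a) (Quotient.mk ρ b)) ↔
    ∀ a b : A, ChainLe (· ≤ ·) ρ.r a b → ChainLe (· ≤ ·) ρ.r b a → ρ.r a b :=
  stmt_0_general act hA ρ hcong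
end

section
/- Let (X_i, φ_j^i) be a direct system of (S,T)-posets over a directed index set, with direct limit (X, φ_i). Then φ_i is an order embedding if and only if φ_k^i is an order embedding for all k ≥ i. -/
universe u v

/-- An `(S,T)`-poset structure: commuting monotone left `S`- and right `T`-actions. -/
structure IsSTPoset (S T A : Type*) [Monoid S] [Monoid T] [PartialOrder S] [PartialOrder T]
    [PartialOrder A] (aL : S → A → A) (aR : A → T → A) : Prop where
  left : IsLeftSPoset S A aL
  right : IsRightSPoset T A aR
  compat : ∀ s a t, aR (aL s a) t = aL s (aR a t)

/-- A morphism of `(S,T)`-posets: a monotone map commuting with both actions. -/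
structure IsSTMorphism (S T : Type*) {A B : Type*} [Monoid S] [Monoid T] [PartialOrder S]
    [PartialOrder T] [PartialOrder A] [PartialOrder B]
    (aLA : S → A → A) (aRA : A → T → A) (aLB : S → B → B) (aRB : B → T → B)
    (f : A → B) : Prop where
  mono : Monotone f
  mapL : ∀ s a, f (aLA s a) = aLB s (f a)
  mapR : ∀ a t, f (aRA a t) = aRB (f a) t

/-- A direct system of `(S,T)`-posets over a quasi-ordered index set `I`. -/
structure IsDirectSystem (S T : Type u) [Monoid S] [Monoid T] [PartialOrder S] [PartialOrder T]
    {I : Type u} [Preorder I] (X : I → Type u) [∀ i, PartialOrder (X i)]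
    (aL : ∀ i, S → X i → X i) (aR : ∀ i, X i → T → X i)
    (φ : ∀ i j, i ≤ j → X i → X j) : Prop where
  poset : ∀ i, IsSTPoset S T (X i) (aL i) (aR i)
  morph : ∀ i j (h : i ≤ j), IsSTMorphism S T (aL i) (aR i) (aL j) (aR j) (φ i j h)
  map_id : ∀ i x, φ i i le_rfl x = x
  map_comp : ∀ i j k (hij : i ≤ j) (hjk : j ≤ k) x,
    φ j k hjk (φ i j hij x) = φ i k (hij.trans hjk) x

/-- `(L, ψ)` is the direct limit of the direct system `(X, φ)` of `(S,T)`-posets: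
it is a compatible cocone satisfying the usual universal property. -/
structure IsDirectLimit (S T : Type u) [Monoid S] [Monoid T] [PartialOrder S] [PartialOrder T]
    {I : Type u} [Preorder I] (X : I → Type u) [∀ i, PartialOrder (X i)]
    (aL : ∀ i, S → X i → X i) (aR : ∀ i, X i → T → X i)
    (φ : ∀ i j, i ≤ j → X i → X j)
    (L : Type u) [PartialOrder L] (bL : S → L → L) (bR : L → T → L)
    (ψ : ∀ i, X i → L) : Prop where
  poset : IsSTPoset S T L bL bR
  morph : ∀ i, IsSTMorphism S T (aL i) (aR i) bL bR (ψ i)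
  compat : ∀ i j (h : i ≤ j) x, ψ j (φ i j h x) = ψ i x
  universal : ∀ (Z : Type u) (pz : PartialOrder Z) (cL : S → Z → Z) (cR : Z → T → Z),
    @IsSTPoset S T Z _ _ _ _ pz cL cR →
    ∀ g : ∀ i, X i → Z,
      (∀ i, @IsSTMorphism S T (X i) Z _ _ _ _ _ pz (aL i) (aR i) cL cR (g i)) →
      (∀ i j (h : i ≤ j) x, g j (φ i j h x) = g i x) →
      ∃! h : L → Z,
        (∀ l l' : L, l ≤ l' → pz.le (h l) (h l')) ∧
        (∀ s l, h (bL s l) = cL s (h l)) ∧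
        (∀ l t, h (bR l t) = cR (h l) t) ∧
        (∀ i x, h (ψ i x) = g i x)

section AuxDL

variable {S T : Type u} [Monoid S] [Monoid T] [PartialOrder S] [PartialOrder T]
  {I : Type u} [Preorder I] {X : I → Type u} [∀ i, PartialOrder (X i)]
  {aL : ∀ i, S → X i → X i} {aR : ∀ i, X i → T → X i}

/-- Order relation on representatives of the concrete direct limit. -/
def SigLe (φ : ∀ i j, i ≤ j → X i → X j) (p q : Σ j, X j) : Prop :=
  ∃ l, ∃ (hp : p.1 ≤ l) (hq : q.1 ≤ l), φ p.1 l hp p.2 ≤ φ q.1 l hq q.2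

/-- Equality relation on representatives of the concrete direct limit. -/
def SigEquiv (φ : ∀ i j, i ≤ j → X i → X j) (p q : Σ j, X j) : Prop :=
  ∃ l, ∃ (hp : p.1 ≤ l) (hq : q.1 ≤ l), φ p.1 l hp p.2 = φ q.1 l hq q.2

variable {φ : ∀ i j, i ≤ j → X i → X j}

theorem le_push (hsys : IsDirectSystem S T X aL aR φ) {j k l n : I}
    (hjl : j ≤ l) (hkl : k ≤ l) (hln : l ≤ n) {x : X j} {y : X k}
    (h : φ j l hjl x ≤ φ k l hkl y) :
    φ j n (hjl.trans hln) x ≤ φ k n (hkl.trans hln) y := by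
  rw [← hsys.map_comp j l n hjl hln x, ← hsys.map_comp k l n hkl hln y]
  exact (hsys.morph l n hln).mono h

theorem eq_push (hsys : IsDirectSystem S T X aL aR φ) {j k l n : I}
    (hjl : j ≤ l) (hkl : k ≤ l) (hln : l ≤ n) {x : X j} {y : X k}
    (h : φ j l hjl x = φ k l hkl y) :
    φ j n (hjl.trans hln) x = φ k n (hkl.trans hln) y := by
  rw [← hsys.map_comp j l n hjl hln x, ← hsys.map_comp k l n hkl hln y, h]

theorem sigEquiv_symm {p q : Σ j, X j} (h : SigEquiv φ p q) : SigEquiv φ q p := by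
  obtain ⟨l, hp, hq, he⟩ := h; exact ⟨l, hq, hp, he.symm⟩

theorem sigLe_congr_right (hsys : IsDirectSystem S T X aL aR φ)
    (hdir : ∀ i j : I, ∃ k, i ≤ k ∧ j ≤ k) {p q q' : Σ j, X j}
    (h : SigEquiv φ q q') : SigLe φ p q → SigLe φ p q' := by
  rintro ⟨l, hp, hq, hle⟩
  obtain ⟨m, h1, h2, heq⟩ := h
  obtain ⟨n, hln, hmn⟩ := hdir l m
  refine ⟨n, hp.trans hln, h2.trans hmn, ?_⟩
  have A := le_push hsys hp hq hln hle
  have B := eq_push hsys h1 h2 hmn heq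
  exact A.trans (le_of_eq B)

theorem sigLe_congr_left (hsys : IsDirectSystem S T X aL aR φ)
    (hdir : ∀ i j : I, ∃ k, i ≤ k ∧ j ≤ k) {p p' q : Σ j, X j}
    (h : SigEquiv φ p p') : SigLe φ p q → SigLe φ p' q := by
  rintro ⟨l, hp, hq, hle⟩
  obtain ⟨m, h1, h2, heq⟩ := h
  obtain ⟨n, hln, hmn⟩ := hdir l m
  refine ⟨n, h2.trans hmn, hq.trans hln, ?_⟩
  have A := le_push hsys hp hq hln hle
  have B := eq_push hsys h1 h2 hmn heq
  exact (le_of_eq B.symm).trans A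

theorem sigLe_trans (hsys : IsDirectSystem S T X aL aR φ)
    (hdir : ∀ i j : I, ∃ k, i ≤ k ∧ j ≤ k) {p q r : Σ j, X j}
    (h1 : SigLe φ p q) (h2 : SigLe φ q r) : SigLe φ p r := by
  obtain ⟨l, hp, hq, hle1⟩ := h1
  obtain ⟨m, hq', hr, hle2⟩ := h2
  obtain ⟨n, hln, hmn⟩ := hdir l m
  refine ⟨n, hp.trans hln, hr.trans hmn, ?_⟩
  have A := le_push hsys hp hq hln hle1
  have B := le_push hsys hq' hr hmn hle2
  exact A.trans B

theorem sigLe_antisymm (hsys : IsDirectSystem S T X aL aR φ)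
    (hdir : ∀ i j : I, ∃ k, i ≤ k ∧ j ≤ k) {p q : Σ j, X j}
    (h1 : SigLe φ p q) (h2 : SigLe φ q p) : SigEquiv φ p q := by
  obtain ⟨l, hp, hq, hle1⟩ := h1
  obtain ⟨m, hq', hp', hle2⟩ := h2
  obtain ⟨n, hln, hmn⟩ := hdir l m
  refine ⟨n, hp.trans hln, hq.trans hln, ?_⟩
  have A := le_push hsys hp hq hln hle1
  have B := le_push hsys hq' hp' hmn hle2
  exact le_antisymm A B

/-- The concrete direct limit as a quotient. -/
def DLQuot (φ : ∀ i j, i ≤ j → X i → X j) : Type u := Quot (SigEquiv φ)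

/-- The lifted order on the quotient. -/
def dlLe (hsys : IsDirectSystem S T X aL aR φ)
    (hdir : ∀ i j : I, ∃ k, i ≤ k ∧ j ≤ k) : DLQuot φ → DLQuot φ → Prop :=
  Quot.lift₂ (SigLe φ)
    (fun _ _ _ h => propext ⟨sigLe_congr_right hsys hdir h,
      sigLe_congr_right hsys hdir (sigEquiv_symm h)⟩)
    (fun _ _ _ h => propext ⟨sigLe_congr_left hsys hdir h,
      sigLe_congr_left hsys hdir (sigEquiv_symm h)⟩)

/-- The partial order on the concrete direct limit. -/
def dlPO (hsys : IsDirectSystem S T X aL aR φ)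
    (hdir : ∀ i j : I, ∃ k, i ≤ k ∧ j ≤ k) : PartialOrder (DLQuot φ) where
  le := dlLe hsys hdir
  le_refl := by
    refine Quot.ind fun p => ?_
    exact ⟨p.1, le_rfl, le_rfl, le_rfl⟩
  le_trans := by
    refine Quot.ind fun p => Quot.ind fun q => Quot.ind fun r => fun h1 h2 => ?_
    exact sigLe_trans hsys hdir h1 h2
  le_antisymm := by
    refine Quot.ind fun p => Quot.ind fun q => fun h1 h2 => ?_
    exact Quot.sound (sigLe_antisymm hsys hdir h1 h2)

/-- Left action on the concrete limit. -/
def dlL (hsys : IsDirectSystem S T X aL aR φ) (s : S) : DLQuot φ → DLQuot φ :=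
  Quot.lift (fun p => Quot.mk (SigEquiv φ) ⟨p.1, aL p.1 s p.2⟩) (by
    rintro p q ⟨l, hp, hq, he⟩
    refine Quot.sound ⟨l, hp, hq, ?_⟩
    rw [(hsys.morph p.1 l hp).mapL, (hsys.morph q.1 l hq).mapL, he])

/-- Right action on the concrete limit. -/
def dlR (hsys : IsDirectSystem S T X aL aR φ) (z : DLQuot φ) (t : T) : DLQuot φ :=
  Quot.lift (fun p => Quot.mk (SigEquiv φ) ⟨p.1, aR p.1 p.2 t⟩) (by
    rintro p q ⟨l, hp, hq, he⟩
    refine Quot.sound ⟨l, hp, hq, ?_⟩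
    rw [(hsys.morph p.1 l hp).mapR, (hsys.morph q.1 l hq).mapR, he]) z

theorem dl_poset (hsys : IsDirectSystem S T X aL aR φ)
    (hdir : ∀ i j : I, ∃ k, i ≤ k ∧ j ≤ k) :
    @IsSTPoset S T (DLQuot φ) _ _ _ _ (dlPO hsys hdir) (dlL hsys) (dlR hsys) := by
  letI := dlPO hsys hdir
  refine ⟨⟨?_, ?_, ?_, ?_⟩, ⟨?_, ?_, ?_, ?_⟩, ?_⟩
  · refine Quot.ind fun p => ?_
    show Quot.mk (SigEquiv φ) (⟨p.1, aL p.1 1 p.2⟩ : Σ j, X j) = Quot.mk (SigEquiv φ) p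
    rw [(hsys.poset p.1).left.one_act]
  · intro s t
    refine Quot.ind fun p => ?_
    show Quot.mk (SigEquiv φ) (⟨p.1, aL p.1 (s * t) p.2⟩ : Σ j, X j) = Quot.mk (SigEquiv φ) (⟨p.1, aL p.1 s (aL p.1 t p.2)⟩ : Σ j, X j)
    rw [(hsys.poset p.1).left.mul_act]
  · intro a b s h
    induction a using Quot.ind with | _ p => ?_
    induction b using Quot.ind with | _ q => ?_
    obtain ⟨l, hp, hq, hle⟩ := h
    refine ⟨l, hp, hq, ?_⟩
    rw [(hsys.morph p.1 l hp).mapL, (hsys.morph q.1 l hq).mapL]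
    exact (hsys.poset l).left.mono_act s hle
  · intro a s t hst
    induction a using Quot.ind with | _ p => ?_
    refine ⟨p.1, le_rfl, le_rfl, ?_⟩
    rw [(hsys.morph p.1 p.1 le_rfl).mapL, (hsys.morph p.1 p.1 le_rfl).mapL]
    exact (hsys.poset p.1).left.act_mono _ hst
  · refine Quot.ind fun p => ?_
    show Quot.mk (SigEquiv φ) (⟨p.1, aR p.1 p.2 1⟩ : Σ j, X j) = Quot.mk (SigEquiv φ) p
    rw [(hsys.poset p.1).right.act_one]
  · intro a s t
    induction a using Quot.ind with | _ p => ?_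
    show Quot.mk (SigEquiv φ) (⟨p.1, aR p.1 p.2 (s * t)⟩ : Σ j, X j) = Quot.mk (SigEquiv φ) (⟨p.1, aR p.1 (aR p.1 p.2 s) t⟩ : Σ j, X j)
    rw [(hsys.poset p.1).right.act_mul]
  · intro a b t h
    induction a using Quot.ind with | _ p => ?_
    induction b using Quot.ind with | _ q => ?_
    obtain ⟨l, hp, hq, hle⟩ := h
    refine ⟨l, hp, hq, ?_⟩
    rw [(hsys.morph p.1 l hp).mapR, (hsys.morph q.1 l hq).mapR]
    exact (hsys.poset l).right.mono_act t hle
  · intro a s t hst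
    induction a using Quot.ind with | _ p => ?_
    refine ⟨p.1, le_rfl, le_rfl, ?_⟩
    rw [(hsys.morph p.1 p.1 le_rfl).mapR, (hsys.morph p.1 p.1 le_rfl).mapR]
    exact (hsys.poset p.1).right.act_mono _ hst
  · intro s a t
    induction a using Quot.ind with | _ p => ?_
    show Quot.mk (SigEquiv φ) (⟨p.1, aR p.1 (aL p.1 s p.2) t⟩ : Σ j, X j) = Quot.mk (SigEquiv φ) (⟨p.1, aL p.1 s (aR p.1 p.2 t)⟩ : Σ j, X j)
    rw [(hsys.poset p.1).compat]

/-- The canonical map to the concrete limit. -/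
def dlG (φ : ∀ i j, i ≤ j → X i → X j) (j : I) (x : X j) : DLQuot φ :=
  Quot.mk (SigEquiv φ) ⟨j, x⟩

theorem dl_morph (hsys : IsDirectSystem S T X aL aR φ)
    (hdir : ∀ i j : I, ∃ k, i ≤ k ∧ j ≤ k) (j : I) :
    @IsSTMorphism S T (X j) (DLQuot φ) _ _ _ _ _ (dlPO hsys hdir)
      (aL j) (aR j) (dlL hsys) (dlR hsys) (dlG φ j) := by
  letI := dlPO hsys hdir
  refine ⟨?_, fun _ _ => rfl, fun _ _ => rfl⟩
  intro x y h
  refine ⟨j, le_rfl, le_rfl, ?_⟩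
  rw [hsys.map_id, hsys.map_id]
  exact h

theorem dl_compat (hsys : IsDirectSystem S T X aL aR φ) :
    ∀ j k (h : j ≤ k) x, dlG φ k (φ j k h x) = dlG φ j x := by
  intro j k h x
  refine Quot.sound ⟨k, le_rfl, h, ?_⟩
  rw [hsys.map_id]

end AuxDL

/-- for a direct system of (S,T)-posets over a directed index set with direct
limit (X, φᵢ): φᵢ is an order embedding iff φᵏᵢ is an order embedding for all k ≥ i. -/
theorem stmt_5 {S T : Type u} [Monoid S] [Monoid T] [PartialOrder S] [PartialOrder T]
    (hS : IsPomonoid S) (hT : IsPomonoid T)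
    {I : Type u} [Preorder I] (hdir : ∀ i j : I, ∃ k, i ≤ k ∧ j ≤ k)
    (X : I → Type u) [∀ i, PartialOrder (X i)]
    (aL : ∀ i, S → X i → X i) (aR : ∀ i, X i → T → X i)
    (φ : ∀ i j, i ≤ j → X i → X j)
    (hsys : IsDirectSystem S T X aL aR φ)
    (L : Type u) [PartialOrder L] (bL : S → L → L) (bR : L → T → L)
    (ψ : ∀ i, X i → L)
    (hlim : IsDirectLimit S T X aL aR φ L bL bR ψ)
    (i : I) :
    (∀ x y : X i, x ≤ y ↔ ψ i x ≤ ψ i y) ↔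
      ∀ (k : I) (h : i ≤ k), ∀ x y : X i, x ≤ y ↔ φ i k h x ≤ φ i k h y := by
  constructor
  · intro hψ k hk x y
    constructor
    · exact fun h => (hsys.morph i k hk).mono h
    · intro hle
      have h2 := (hlim.morph k).mono hle
      rw [hlim.compat i k hk x, hlim.compat i k hk y] at h2
      exact (hψ x y).mpr h2
  · intro hφ x y
    obtain ⟨h, ⟨hmono, hL, hR, hcomm⟩, _⟩ :=
      hlim.universal (DLQuot φ) (dlPO hsys hdir) (dlL hsys) (dlR hsys)
        (dl_poset hsys hdir) (dlG φ) (dl_morph hsys hdir) (dl_compat hsys)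
    constructor
    · exact fun h => (hlim.morph i).mono h
    · intro hle
      have h2 := hmono _ _ hle
      rw [hcomm i x, hcomm i y] at h2
      have h3 : SigLe φ ⟨i, x⟩ ⟨i, y⟩ := h2
      obtain ⟨l, hp, hq, hle'⟩ := h3
      exact (hφ l hp x y).mpr hle'
end

section
/- Let the square with maps f : A → B, g : A → C, γ : B → D, δ : C → D be a pushout in the category of S-posets. If γ(b) ≤ δ(c) for b ∈ B and c ∈ C, then there exist a, a' ∈ A such that b ≤ f(a) and g(a') ≤ c. -/
universe u v

/-- The componentwise right `S`-action on the coproduct `B ⊕ C`. -/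
def sumAct {S B C : Type*} (aB : B → S → B) (aC : C → S → C) : B ⊕ C → S → B ⊕ C
  | Sum.inl b, s => Sum.inl (aB b s)
  | Sum.inr c, s => Sum.inr (aC c s)

/-- The symmetrized generating relation `R ∪ R⁻¹` of the pushout of `f` and `g`,
where `R = {(f a, g a) : a ∈ A}`, on the coproduct `B ⊕ C`. -/
def pushR {A B C : Type*} (f : A → B) (g : A → C) (p q : B ⊕ C) : Prop :=
  (∃ a, p = Sum.inl (f a) ∧ q = Sum.inr (g a)) ∨ (∃ a, p = Sum.inr (g a) ∧ q = Sum.inl (f a))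

/-- The order `≤_{α(R ∪ R⁻¹)}` on `B ⊕ C` inducing the order of the pushout
`D = (B ⊕ C)/ν(R ∪ R⁻¹)`: `γ(b) ≤ δ(c)` in `D` iff `pushLe aB aC f g (.inl b) (.inr c)`. -/
def pushLe {S A B C : Type*} [PartialOrder B] [PartialOrder C]
    (aB : B → S → B) (aC : C → S → C) (f : A → B) (g : A → C) : B ⊕ C → B ⊕ C → Prop :=
  ChainLe (· ≤ ·) (AlphaRel (sumAct aB aC) (pushR f g))


section Aux

variable {S A B C : Type u} [Monoid S] [PartialOrder S] [PartialOrder B] [PartialOrder C]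
variable {aA : A → S → A} {aB : B → S → B} {aC : C → S → C} {f : A → B} {g : A → C}

lemma alpha_src (hfe : ∀ a s, f (aA a s) = aB (f a) s) (hge : ∀ a s, g (aA a s) = aC (g a) s)
    {p q : B ⊕ C} (h : AlphaRel (sumAct aB aC) (pushR f g) p q) :
    p = q ∨ (∃ a, p = Sum.inl (f a)) ∨ (∃ a, p = Sum.inr (g a)) := by
  cases h with
  | refl => exact Or.inl rfl
  | step x x' s b hR h' =>
    rcases hR with ⟨a, hx, _⟩ | ⟨a, hx, _⟩
    · subst hx; exact Or.inr (Or.inl ⟨aA a s, by simp [sumAct, hfe]⟩)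
    · subst hx; exact Or.inr (Or.inr ⟨aA a s, by simp [sumAct, hge]⟩)

lemma alpha_tgt (hfe : ∀ a s, f (aA a s) = aB (f a) s) (hge : ∀ a s, g (aA a s) = aC (g a) s)
    {p q : B ⊕ C} (h : AlphaRel (sumAct aB aC) (pushR f g) p q) :
    p = q ∨ (∃ a, q = Sum.inl (f a)) ∨ (∃ a, q = Sum.inr (g a)) := by
  induction h with
  | refl => exact Or.inl rfl
  | step x x' s b hR h' ih =>
    rcases ih with heq | h2
    · rcases hR with ⟨a, _, hx'⟩ | ⟨a, _, hx'⟩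
      · subst hx'
        exact Or.inr (Or.inr ⟨aA a s, by rw [← heq]; simp [sumAct, hge]⟩)
      · subst hx'
        exact Or.inr (Or.inl ⟨aA a s, by rw [← heq]; simp [sumAct, hfe]⟩)
    · exact Or.inr h2

lemma chain_left (hfe : ∀ a s, f (aA a s) = aB (f a) s)
    (hge : ∀ a s, g (aA a s) = aC (g a) s)
    {p q : B ⊕ C} (h : pushLe aB aC f g p q) :
    ∀ b : B, p = Sum.inl b → (∃ a, b ≤ f a) ∨ (∃ b', q = Sum.inl b' ∧ b ≤ b') := by
  induction h with
  | base hle =>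
    intro b hb
    subst hb
    rename_i q
    cases q with
    | inl b' => exact Or.inr ⟨b', rfl, by simpa using hle⟩
    | inr c' => simp at hle
  | step d d' hle hρ hchain ih =>
    intro b hb
    subst hb
    obtain ⟨b₁, rfl, hbb₁⟩ : ∃ b₁, d = Sum.inl b₁ ∧ b ≤ b₁ := by
      cases d with
      | inl b₁ => exact ⟨b₁, rfl, by simpa using hle⟩
      | inr c₁ => simp at hle
    rcases alpha_src hfe hge hρ with heq | ⟨a, ha⟩ | ⟨a, ha⟩
    · rcases ih b₁ heq.symm with ⟨a, hfa⟩ | ⟨b', hq, hb'⟩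
      · exact Or.inl ⟨a, le_trans hbb₁ hfa⟩
      · exact Or.inr ⟨b', hq, le_trans hbb₁ hb'⟩
    · rw [Sum.inl.injEq] at ha
      exact Or.inl ⟨a, ha ▸ hbb₁⟩
    · simp at ha

lemma chain_right (hfe : ∀ a s, f (aA a s) = aB (f a) s)
    (hge : ∀ a s, g (aA a s) = aC (g a) s)
    {p q : B ⊕ C} (h : pushLe aB aC f g p q) :
    ∀ c : C, q = Sum.inr c →
      ((∃ b : B, p = Sum.inl b) → ∃ a', g a' ≤ c) ∧
      (∀ c₀ : C, p = Sum.inr c₀ → c₀ ≤ c ∨ ∃ a', g a' ≤ c) := by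
  induction h with
  | base hle =>
    intro c hq
    subst hq
    constructor
    · rintro ⟨b, rfl⟩; simp at hle
    · rintro c₀ rfl; exact Or.inl (by simpa using hle)
  | step d d' hle hρ hchain ih =>
    intro c hq
    subst hq
    have IH := ih c rfl
    have tgt := alpha_tgt hfe hge hρ
    constructor
    · rintro ⟨b, rfl⟩
      obtain ⟨b₁, rfl, -⟩ : ∃ b₁, d = Sum.inl b₁ ∧ b ≤ b₁ := by
        cases d with
        | inl b₁ => exact ⟨b₁, rfl, by simpa using hle⟩
        | inr c₁ => simp at hle
      rcases tgt with heq | ⟨a, ha⟩ | ⟨a, ha⟩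
      · exact IH.1 ⟨b₁, heq.symm⟩
      · exact IH.1 ⟨f a, ha⟩
      · rcases IH.2 (g a) ha with h1 | h1
        · exact ⟨a, h1⟩
        · exact h1
    · rintro c₀ rfl
      obtain ⟨c₁, rfl, hcc₁⟩ : ∃ c₁, d = Sum.inr c₁ ∧ c₀ ≤ c₁ := by
        cases d with
        | inl b₁ => simp at hle
        | inr c₁ => exact ⟨c₁, rfl, by simpa using hle⟩
      rcases tgt with heq | ⟨a, ha⟩ | ⟨a, ha⟩
      · rcases IH.2 c₁ heq.symm with h1 | h1
        · exact Or.inl (le_trans hcc₁ h1)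
        · exact Or.inr h1
      · exact Or.inr (IH.1 ⟨f a, ha⟩)
      · rcases IH.2 (g a) ha with h1 | h1
        · exact Or.inr ⟨a, h1⟩
        · exact Or.inr h1

end Aux

/-- in the pushout of S-posets, if γ(b) ≤ δ(c) then there exist a, a' ∈ A
with b ≤ f(a) and g(a') ≤ c. -/
theorem stmt_6 {S A B C : Type u} [Monoid S] [PartialOrder S] [PartialOrder A] [PartialOrder B]
    [PartialOrder C] (hS : IsPomonoid S)
    (aA : A → S → A) (aB : B → S → B) (aC : C → S → C)
    (hA : IsRightSPoset S A aA) (hB : IsRightSPoset S B aB) (hC : IsRightSPoset S C aC)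
    (f : A → B) (g : A → C)
    (hfm : Monotone f) (hfe : ∀ a s, f (aA a s) = aB (f a) s)
    (hgm : Monotone g) (hge : ∀ a s, g (aA a s) = aC (g a) s)
    (b : B) (c : C)
    (h : pushLe aB aC f g (Sum.inl b) (Sum.inr c)) :
    ∃ a a' : A, b ≤ f a ∧ g a' ≤ c := by
  obtain ⟨a, hbf⟩ := (chain_left hfe hge h b rfl).resolve_right
    (by rintro ⟨b', hb', -⟩; simp at hb')
  obtain ⟨a', hga⟩ := (chain_right hfe hge h c rfl).1 ⟨b, rfl⟩
  exact ⟨a, a', hbf, hga⟩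
end

section
/- Let f : A → B, g : A → C, γ : B → D, δ : C → D form a pushout square in the category of S-posets. If γ(b) = δ(c) for some b ∈ B, c ∈ C, then there exist a₁, a₁', a₂, a₂' ∈ A such that f(a₁') ≤ b ≤ f(a₁) and g(a₂') ≤ c ≤ g(a₂). -/
universe u v

set_option linter.unusedSectionVars false
section Aux
variable {S A B C : Type u} [Monoid S] [PartialOrder S] [PartialOrder B] [PartialOrder C]
  {aB : B → S → B} {aC : C → S → C} {f : A → B} {g : A → C}

lemma alpha_last {p q : B ⊕ C} (h : AlphaRel (sumAct aB aC) (pushR f g) p q) :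
    p = q ∨ (∃ x x' s, pushR f g x x' ∧ q = sumAct aB aC x' s) := by
  induction h with
  | refl => exact Or.inl rfl
  | step x x' s b hR h' ih =>
    rcases ih with rfl | ⟨y, y', t, hR', rfl⟩
    · exact Or.inr ⟨x, x', s, hR, rfl⟩
    · exact Or.inr ⟨y, y', t, hR', rfl⟩

lemma alpha_first {p q : B ⊕ C} (h : AlphaRel (sumAct aB aC) (pushR f g) p q) :
    p = q ∨ (∃ x x' s, pushR f g x x' ∧ p = sumAct aB aC x s) := by
  cases h with
  | refl => exact Or.inl rfl
  | step x x' s b hR h' => exact Or.inr ⟨x, x', s, hR, rfl⟩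

/-- First crossing, chain starting at `inl b`. -/
lemma chain_from_inl (aA : A → S → A) (hfe : ∀ a s, f (aA a s) = aB (f a) s) {p q : B ⊕ C} (h : pushLe aB aC f g p q) :
    ∀ b : B, p = Sum.inl b → (∃ a, b ≤ f a) ∨ (∃ b', q = Sum.inl b' ∧ b ≤ b') := by
  induction h with
  | base hle =>
    rintro b rfl
    cases hle with
    | inl hb => exact Or.inr ⟨_, rfl, hb⟩
  | step d d' hle hρ h' ih =>
    rintro b rfl
    cases hle with
    | inl hb =>
      rcases alpha_first hρ with rfl | ⟨x, x', s, hR, hx⟩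
      · rcases ih _ rfl with ⟨a, ha⟩ | ⟨b', hq, hb'⟩
        · exact Or.inl ⟨a, hb.trans ha⟩
        · exact Or.inr ⟨b', hq, hb.trans hb'⟩
      · rcases hR with ⟨a, rfl, rfl⟩ | ⟨a, rfl, rfl⟩
        · simp only [sumAct, Sum.inl.injEq] at hx
          exact Or.inl ⟨aA a s, by rw [hfe]; exact hb.trans_eq hx⟩
        · simp [sumAct] at hx

/-- First crossing, chain starting at `inr c`. -/
lemma chain_from_inr (aA : A → S → A) (hge : ∀ a s, g (aA a s) = aC (g a) s) {p q : B ⊕ C} (h : pushLe aB aC f g p q) :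
    ∀ c : C, p = Sum.inr c → (∃ a, c ≤ g a) ∨ (∃ c', q = Sum.inr c' ∧ c ≤ c') := by
  induction h with
  | base hle =>
    rintro c rfl
    cases hle with
    | inr hc => exact Or.inr ⟨_, rfl, hc⟩
  | step d d' hle hρ h' ih =>
    rintro c rfl
    cases hle with
    | inr hc =>
      rcases alpha_first hρ with rfl | ⟨x, x', s, hR, hx⟩
      · rcases ih _ rfl with ⟨a, ha⟩ | ⟨c', hq, hc'⟩
        · exact Or.inl ⟨a, hc.trans ha⟩
        · exact Or.inr ⟨c', hq, hc.trans hc'⟩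
      · rcases hR with ⟨a, rfl, rfl⟩ | ⟨a, rfl, rfl⟩
        · simp [sumAct] at hx
        · simp only [sumAct, Sum.inr.injEq] at hx
          exact Or.inl ⟨aA a s, by rw [hge]; exact hc.trans_eq hx⟩

/-- Last crossing, chain ending at `inr c`. -/
lemma chain_to_inr (aA : A → S → A) (hge : ∀ a s, g (aA a s) = aC (g a) s) {p q : B ⊕ C} (h : pushLe aB aC f g p q) :
    ∀ c : C, q = Sum.inr c → (∃ a, g a ≤ c) ∨ (∃ c₀, p = Sum.inr c₀ ∧ c₀ ≤ c) := by
  induction h with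
  | base hle =>
    rintro c rfl
    cases hle with
    | inr hc => exact Or.inr ⟨_, rfl, hc⟩
  | step d d' hle hρ h' ih =>
    rintro c rfl
    rcases ih c rfl with ⟨a, ha⟩ | ⟨c₀, rfl, hc₀⟩
    · exact Or.inl ⟨a, ha⟩
    · rcases alpha_last hρ with rfl | ⟨x, x', s, hR, hx⟩
      · cases hle with
        | inr hc => exact Or.inr ⟨_, rfl, hc.trans hc₀⟩
      · rcases hR with ⟨a, rfl, rfl⟩ | ⟨a, rfl, rfl⟩
        · simp only [sumAct, Sum.inr.injEq] at hx
          exact Or.inl ⟨aA a s, by rw [hge]; exact hx.ge.trans hc₀⟩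
        · simp [sumAct] at hx

/-- Last crossing, chain ending at `inl b`. -/
lemma chain_to_inl (aA : A → S → A) (hfe : ∀ a s, f (aA a s) = aB (f a) s) {p q : B ⊕ C} (h : pushLe aB aC f g p q) :
    ∀ b : B, q = Sum.inl b → (∃ a, f a ≤ b) ∨ (∃ b₀, p = Sum.inl b₀ ∧ b₀ ≤ b) := by
  induction h with
  | base hle =>
    rintro b rfl
    cases hle with
    | inl hb => exact Or.inr ⟨_, rfl, hb⟩
  | step d d' hle hρ h' ih =>
    rintro b rfl
    rcases ih b rfl with ⟨a, ha⟩ | ⟨b₀, rfl, hb₀⟩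
    · exact Or.inl ⟨a, ha⟩
    · rcases alpha_last hρ with rfl | ⟨x, x', s, hR, hx⟩
      · cases hle with
        | inl hb => exact Or.inr ⟨_, rfl, hb.trans hb₀⟩
      · rcases hR with ⟨a, rfl, rfl⟩ | ⟨a, rfl, rfl⟩
        · simp [sumAct] at hx
        · simp only [sumAct, Sum.inl.injEq] at hx
          exact Or.inl ⟨aA a s, by rw [hfe]; exact hx.ge.trans hb₀⟩

end Aux

/-- in the pushout of S-posets, if γ(b) = δ(c) then there exist
a₁, a₁', a₂, a₂' ∈ A with f(a₁') ≤ b ≤ f(a₁) and g(a₂') ≤ c ≤ g(a₂). -/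
theorem stmt_7 {S A B C : Type u} [Monoid S] [PartialOrder S] [PartialOrder A] [PartialOrder B]
    [PartialOrder C] (hS : IsPomonoid S)
    (aA : A → S → A) (aB : B → S → B) (aC : C → S → C)
    (hA : IsRightSPoset S A aA) (hB : IsRightSPoset S B aB) (hC : IsRightSPoset S C aC)
    (f : A → B) (g : A → C)
    (hfm : Monotone f) (hfe : ∀ a s, f (aA a s) = aB (f a) s)
    (hgm : Monotone g) (hge : ∀ a s, g (aA a s) = aC (g a) s)
    (b : B) (c : C)
    (h₁ : pushLe aB aC f g (Sum.inl b) (Sum.inr c))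
    (h₂ : pushLe aB aC f g (Sum.inr c) (Sum.inl b)) :
    ∃ a₁ a₁' a₂ a₂' : A, f a₁' ≤ b ∧ b ≤ f a₁ ∧ g a₂' ≤ c ∧ c ≤ g a₂ := by
  obtain ⟨a₁, ha₁⟩ := (chain_from_inl aA hfe h₁ b rfl).resolve_right (by rintro ⟨b', h, -⟩; cases h)
  obtain ⟨a₂', ha₂'⟩ := (chain_to_inr aA hge h₁ c rfl).resolve_right (by rintro ⟨c₀, h, -⟩; cases h)
  obtain ⟨a₂, ha₂⟩ := (chain_from_inr aA hge h₂ c rfl).resolve_right (by rintro ⟨c', h, -⟩; cases h)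
  obtain ⟨a₁', ha₁''⟩ := (chain_to_inl aA hfe h₂ b rfl).resolve_right (by rintro ⟨b₀, h, -⟩; cases h)
  exact ⟨a₁, a₁', a₂, a₂', ha₁'', ha₁, ha₂', ha₂⟩
end

section
/- Let f : A → B, g : A → C, γ : B → D, δ : C → D form a pushout square in the category of S-posets. If f and g are convex S-poset morphisms and γ(b) = δ(c), then there exist a, a' ∈ A with b = f(a) and c = g(a'). -/
universe u v

/-- if f and g are convex and γ(b) = δ(c) in the pushout, then
b = f(a), c = g(a') for some a, a' ∈ A. -/
theorem stmt_8 {S A B C : Type u} [Monoid S] [PartialOrder S] [PartialOrder A] [PartialOrder B]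
    [PartialOrder C] (hS : IsPomonoid S)
    (aA : A → S → A) (aB : B → S → B) (aC : C → S → C)
    (hA : IsRightSPoset S A aA) (hB : IsRightSPoset S B aB) (hC : IsRightSPoset S C aC)
    (f : A → B) (g : A → C)
    (hfm : Monotone f) (hfe : ∀ a s, f (aA a s) = aB (f a) s)
    (hgm : Monotone g) (hge : ∀ a s, g (aA a s) = aC (g a) s)
    (hfc : ∀ (a a' : A) (b' : B), f a ≤ b' → b' ≤ f a' → b' ∈ Set.range f)
    (hgc : ∀ (a a' : A) (c' : C), g a ≤ c' → c' ≤ g a' → c' ∈ Set.range g)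
    (b : B) (c : C)
    (h₁ : pushLe aB aC f g (Sum.inl b) (Sum.inr c))
    (h₂ : pushLe aB aC f g (Sum.inr c) (Sum.inl b)) :
    ∃ a a' : A, b = f a ∧ c = g a' := by

  classical
  -- image predicate
  set Im : B ⊕ C → Prop := fun p => (∃ a, p = Sum.inl (f a)) ∨ (∃ a, p = Sum.inr (g a)) with hIm
  have him : ∀ {d d' : B ⊕ C}, AlphaRel (sumAct aB aC) (pushR f g) d d' →
      d = d' ∨ (Im d ∧ Im d') := by
    intro d d' h
    induction h with
    | refl a => exact Or.inl rfl
    | step x x' s e hR htail ih =>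
      right
      have hx : Im (sumAct aB aC x s) ∧ Im (sumAct aB aC x' s) := by
        rcases hR with ⟨a, hx1, hx2⟩ | ⟨a, hx1, hx2⟩ <;> subst hx1 <;> subst hx2
        · exact ⟨Or.inl ⟨aA a s, by simp [sumAct, hfe]⟩,
                 Or.inr ⟨aA a s, by simp [sumAct, hge]⟩⟩
        · exact ⟨Or.inr ⟨aA a s, by simp [sumAct, hge]⟩,
                 Or.inl ⟨aA a s, by simp [sumAct, hfe]⟩⟩
      refine ⟨hx.1, ?_⟩
      rcases ih with heq | h2
      · exact heq ▸ hx.2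
      · exact h2.2
  have hchain : ∀ {p q : B ⊕ C}, ChainLe (· ≤ ·) (AlphaRel (sumAct aB aC) (pushR f g)) p q →
      p ≤ q ∨ ((∃ d, Im d ∧ p ≤ d) ∧ (∃ d, Im d ∧ d ≤ q)) := by
    intro p q h
    induction h with
    | base h => exact Or.inl h
    | step d d' hpd hrel htail ih =>
      rcases him hrel with heq | ⟨hd, hd'⟩
      · subst heq
        rcases ih with h | ⟨⟨e, he, hde⟩, h2⟩
        · exact Or.inl (hpd.trans h)
        · exact Or.inr ⟨⟨e, he, hpd.trans hde⟩, h2⟩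
      · refine Or.inr ⟨⟨d, hd, hpd⟩, ?_⟩
        rcases ih with h | ⟨_, h2⟩
        · exact ⟨d', hd', h⟩
        · exact h2
  rcases hchain h₁ with h | ⟨⟨d1, hd1, hbd1⟩, ⟨d2, hd2, hd2c⟩⟩
  · exact absurd h Sum.not_inl_le_inr
  rcases hchain h₂ with h | ⟨⟨d3, hd3, hcd3⟩, ⟨d4, hd4, hd4b⟩⟩
  · exact absurd h Sum.not_inr_le_inl
  -- d1 = inl (f a₁) with b ≤ f a₁
  rcases hd1 with ⟨a1, rfl⟩ | ⟨a1, rfl⟩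
  swap
  · exact absurd hbd1 Sum.not_inl_le_inr
  rcases hd2 with ⟨a2, rfl⟩ | ⟨a2, rfl⟩
  · exact absurd hd2c Sum.not_inl_le_inr
  rcases hd3 with ⟨a3, rfl⟩ | ⟨a3, rfl⟩
  · exact absurd hcd3 Sum.not_inr_le_inl
  rcases hd4 with ⟨a4, rfl⟩ | ⟨a4, rfl⟩
  swap
  · exact absurd hd4b Sum.not_inr_le_inl
  have hb1 : b ≤ f a1 := Sum.inl_le_inl_iff.mp hbd1
  have hb2 : f a4 ≤ b := Sum.inl_le_inl_iff.mp hd4b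
  have hc1 : g a2 ≤ c := Sum.inr_le_inr_iff.mp hd2c
  have hc2 : c ≤ g a3 := Sum.inr_le_inr_iff.mp hcd3
  obtain ⟨ab, hab⟩ := hfc a4 a1 b hb2 hb1
  obtain ⟨ac, hac⟩ := hgc a2 a3 c hc1 hc2
  exact ⟨ab, ac, hab.symm, hac.symm⟩
end

section
/- Let f : A → B, g : A → C, γ : B → D, δ : C → D form a pushout square in the category of S-posets. If f is an order embedding, then δ is also an order embedding. -/
universe u v

section Aux

lemma chainLe_trans {F : Type*} {le ρ : F → F → Prop} (hle : Transitive le)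
    {a b c : F} (h1 : ChainLe le ρ a b) (h2 : ChainLe le ρ b c) : ChainLe le ρ a c := by
  induction h1 with
  | base h =>
    cases h2 with
    | base h' => exact .base (hle h h')
    | step d d' hld hρ hch => exact .step d d' (hle h hld) hρ hch
  | step d d' hld hρ hch ih => exact .step d d' hld hρ (ih h2)

lemma pushLe_refl {S A B C : Type u} [Monoid S] [PartialOrder B] [PartialOrder C]
    (aB : B → S → B) (aC : C → S → C) (f : A → B) (g : A → C) (p : B ⊕ C) :
    pushLe aB aC f g p p := ChainLe.base le_rfl

lemma pushLe_trans {S A B C : Type u} [Monoid S] [PartialOrder B] [PartialOrder C]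
    {aB : B → S → B} {aC : C → S → C} {f : A → B} {g : A → C} {p q r : B ⊕ C}
    (h1 : pushLe aB aC f g p q) (h2 : pushLe aB aC f g q r) : pushLe aB aC f g p r :=
  chainLe_trans (le := (· ≤ ·)) (fun _ _ _ hab hbc => le_trans hab hbc) h1 h2

/-- The invariant: `Inv c p` says that `p` is "at least `c`" in the appropriate sense. -/
def PushInv {A B C : Type u} [PartialOrder B] [PartialOrder C] (f : A → B) (g : A → C) (c : C) : B ⊕ C → Prop
  | Sum.inl b => ∃ a, c ≤ g a ∧ f a ≤ b
  | Sum.inr c' => c ≤ c'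

section Main

variable {S A B C : Type u} [Monoid S] [PartialOrder A] [PartialOrder B] [PartialOrder C]
    {aA : A → S → A} {aB : B → S → B} {aC : C → S → C} {f : A → B} {g : A → C}

lemma pushInv_le (c : C) {p q : B ⊕ C} (h : p ≤ q) (hp : PushInv f g c p) : PushInv f g c q := by
  cases p with
  | inl b =>
    cases q with
    | inl b' =>
      obtain ⟨a, h1, h2⟩ := hp
      exact ⟨a, h1, le_trans h2 (Sum.inl_le_inl_iff.1 h)⟩
    | inr c' => exact absurd h (by simp [Sum.le_def])
  | inr x =>
    cases q with
    | inl b' => exact absurd h (by simp [Sum.le_def])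
    | inr c' => exact le_trans hp (Sum.inr_le_inr_iff.1 h)

lemma pushInv_alpha (hgm : Monotone g) (hfe : ∀ a s, f (aA a s) = aB (f a) s)
    (hge : ∀ a s, g (aA a s) = aC (g a) s)
    (hemb : ∀ a a' : A, a ≤ a' ↔ f a ≤ f a') (c : C) {p q : B ⊕ C}
    (h : AlphaRel (sumAct aB aC) (pushR f g) p q) (hp : PushInv f g c p) : PushInv f g c q := by
  induction h with
  | refl => exact hp
  | step x x' s b hR _ ih =>
    apply ih
    rcases hR with ⟨a, hx, hx'⟩ | ⟨a, hx, hx'⟩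
    · subst hx; subst hx'
      obtain ⟨a₁, h1, h2⟩ := hp
      rw [← hfe] at h2
      have : a₁ ≤ aA a s := (hemb _ _).2 h2
      show c ≤ aC (g a) s
      rw [← hge]
      exact le_trans h1 (hgm this)
    · subst hx; subst hx'
      have hp' : c ≤ aC (g a) s := hp
      exact ⟨aA a s, by rw [hge]; exact hp', by rw [hfe]⟩

lemma pushInv_pushLe (hgm : Monotone g) (hfe : ∀ a s, f (aA a s) = aB (f a) s)
    (hge : ∀ a s, g (aA a s) = aC (g a) s)
    (hemb : ∀ a a' : A, a ≤ a' ↔ f a ≤ f a') (c : C) {p q : B ⊕ C}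
    (h : pushLe aB aC f g p q) (hp : PushInv f g c p) : PushInv f g c q := by
  induction h with
  | base h => exact pushInv_le c h hp
  | step d d' hld hρ _ ih =>
    exact ih (pushInv_alpha hgm hfe hge hemb c hρ (pushInv_le c hld hp))

lemma quot_mk_eq_pushLe {p q : B ⊕ C}
    (h : Quot.mk (fun p q => pushLe aB aC f g p q ∧ pushLe aB aC f g q p) p =
         Quot.mk (fun p q => pushLe aB aC f g p q ∧ pushLe aB aC f g q p) q) :
    pushLe aB aC f g p q := by
  have := congrArg
    (Quot.lift (fun x => pushLe aB aC f g p x)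
      (fun x y hxy => propext ⟨fun h => pushLe_trans h hxy.1, fun h => pushLe_trans h hxy.2⟩)) h
  have h' : pushLe aB aC f g p p = pushLe aB aC f g p q := this
  exact h' ▸ pushLe_refl aB aC f g p

end Main

end Aux

/-- if f is an order embedding then δ : C → D is an order embedding,
where D = (B ⊕ C)/ν(R ∪ R⁻¹) is the pushout and δ(c) is the class of .inr c. -/
theorem stmt_9 {S A B C : Type u} [Monoid S] [PartialOrder S] [PartialOrder A] [PartialOrder B]
    [PartialOrder C] (hS : IsPomonoid S)
    (aA : A → S → A) (aB : B → S → B) (aC : C → S → C)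
    (hA : IsRightSPoset S A aA) (hB : IsRightSPoset S B aB) (hC : IsRightSPoset S C aC)
    (f : A → B) (g : A → C)
    (hfm : Monotone f) (hfe : ∀ a s, f (aA a s) = aB (f a) s)
    (hgm : Monotone g) (hge : ∀ a s, g (aA a s) = aC (g a) s)
    (hemb : ∀ a a' : A, a ≤ a' ↔ f a ≤ f a') :
    ∀ c c' : C,
      QuotLe (fun p q => pushLe aB aC f g p q ∧ pushLe aB aC f g q p) (pushLe aB aC f g)
        (Quot.mk _ (Sum.inr c)) (Quot.mk _ (Sum.inr c')) ↔ c ≤ c' := by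
  intro c c'
  constructor
  · rintro ⟨p, q, hp, hq, hpq⟩
    have h1 : pushLe aB aC f g (Sum.inr c) p := quot_mk_eq_pushLe hp.symm
    have h2 : pushLe aB aC f g q (Sum.inr c') := quot_mk_eq_pushLe hq
    have h3 : pushLe aB aC f g (Sum.inr c) (Sum.inr c') :=
      pushLe_trans h1 (pushLe_trans hpq h2)
    exact pushInv_pushLe hgm hfe hge hemb c h3 le_rfl
  · intro h
    exact ⟨Sum.inr c, Sum.inr c', rfl, rfl, ChainLe.base (Sum.inr_le_inr_iff.2 h)⟩
end

section
/- If (U, S) is a weak poamalgamation pair in the category of pomonoids, then U has the poextension property in S: for every left U-poset X and right U-poset Y, the map X ⊗_U Y → X ⊗_U S ⊗_U Y, x ⊗ y ↦ x ⊗ 1 ⊗ y, is an order embedding. -/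
universe u v

/-- A bundled pomonoid. -/
structure Pomon : Type (u + 1) where
  carrier : Type u
  [mon : Monoid carrier]
  [po : PartialOrder carrier]
  compat : ∀ ⦃a b : carrier⦄, a ≤ b → ∀ c : carrier, a * c ≤ b * c ∧ c * a ≤ c * b

attribute [instance] Pomon.mon Pomon.po

set_option linter.unusedSectionVars false
set_option linter.unusedVariables false

section TleLemmas

variable {U X Y : Type*} [Monoid U]
variable {leX : X → X → Prop} {leY : Y → Y → Prop}
variable {aX : X → U → X} {aY : U → Y → Y}

theorem tle_mono_left (hXt : ∀ a b c : X, leX a b → leX b c → leX a c)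
    {p q : X × Y} (h : TLe leX leY aX aY p q) :
    ∀ x : X, leX x p.1 → TLe leX leY aX aY (x, p.2) q := by
  induction h with
  | base p q x₁ s t h1 h2 h3 =>
    exact fun x hx => .base _ _ x₁ s t (hXt _ _ _ hx h1) h2 h3
  | step p q x₁ s t y₂ h1 h2 h3 ih =>
    exact fun x hx => .step _ _ x₁ s t y₂ (hXt _ _ _ hx h1) h2 h3

theorem tle_trans (hXt : ∀ a b c : X, leX a b → leX b c → leX a c)
    {p q : X × Y} (h1 : TLe leX leY aX aY p q) :
    ∀ r, TLe leX leY aX aY q r → TLe leX leY aX aY p r := by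
  induction h1 with
  | base p q x₁ s t a b c =>
    exact fun r h2 => .step _ _ x₁ s t q.2 a b
      (tle_mono_left hXt (p := q) (q := r) h2 (aX x₁ t) c)
  | step p q x₁ s t y₂ a b c ih =>
    exact fun r h2 => .step _ _ x₁ s t y₂ a b (ih r h2)

theorem tle_refl (hX1 : ∀ x, aX x 1 = x) (hY1 : ∀ y, aY 1 y = y)
    (hXr : ∀ x, leX x x) (hYr : ∀ y, leY y y) (p : X × Y) :
    TLe leX leY aX aY p p :=
  .base p p p.1 1 1 (by rw [hX1]; exact hXr _) (hYr _) (by rw [hX1]; exact hXr _)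

theorem tle_pair (hX1 : ∀ x, aX x 1 = x) (hY1 : ∀ y, aY 1 y = y)
    (hXr : ∀ x, leX x x) {x x' : X} {y y' : Y} (hx : leX x x') (hy : leY y y') :
    TLe leX leY aX aY (x, y) (x', y') :=
  .base _ _ x' 1 1 (by rw [hX1]; exact hx) (by rw [hY1, hY1]; exact hy)
    (by rw [hX1]; exact hXr _)

theorem tle_balance₁ (hX1 : ∀ x, aX x 1 = x) (hY1 : ∀ y, aY 1 y = y)
    (hXr : ∀ x, leX x x) (hYr : ∀ y, leY y y) (x : X) (u : U) (y : Y) :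
    TLe leX leY aX aY (aX x u, y) (x, aY u y) :=
  .base _ _ x u 1 (hXr _) (by rw [hY1]; exact hYr _) (by rw [hX1]; exact hXr _)

theorem tle_balance₂ (hX1 : ∀ x, aX x 1 = x) (hY1 : ∀ y, aY 1 y = y)
    (hXr : ∀ x, leX x x) (hYr : ∀ y, leY y y) (x : X) (u : U) (y : Y) :
    TLe leX leY aX aY (x, aY u y) (aX x u, y) :=
  .base _ _ x 1 u (by rw [hX1]; exact hXr _) (by rw [hY1]; exact hYr _) (hXr _)

theorem tequiv_of_mk_eq (hX1 : ∀ x, aX x 1 = x) (hY1 : ∀ y, aY 1 y = y)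
    (hXr : ∀ x, leX x x) (hYr : ∀ y, leY y y)
    (hXt : ∀ a b c : X, leX a b → leX b c → leX a c)
    {p q : X × Y}
    (h : Quot.mk (TEquiv leX leY aX aY) p = Quot.mk (TEquiv leX leY aX aY) q) :
    TEquiv leX leY aX aY p q := by
  have h' := Quot.eqvGen_exact h
  clear h
  induction h' with
  | rel a b hab => exact hab
  | refl a => exact ⟨tle_refl hX1 hY1 hXr hYr a, tle_refl hX1 hY1 hXr hYr a⟩
  | symm a b _ ih => exact ⟨ih.2, ih.1⟩
  | trans a b c _ _ ih1 ih2 =>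
    exact ⟨tle_trans hXt ih1.1 _ ih2.1, tle_trans hXt ih2.2 _ ih1.2⟩

theorem quotle_iff (hX1 : ∀ x, aX x 1 = x) (hY1 : ∀ y, aY 1 y = y)
    (hXr : ∀ x, leX x x) (hYr : ∀ y, leY y y)
    (hXt : ∀ a b c : X, leX a b → leX b c → leX a c)
    (p q : X × Y) :
    QuotLe (TEquiv leX leY aX aY) (TLe leX leY aX aY)
        (Quot.mk _ p) (Quot.mk _ q) ↔ TLe leX leY aX aY p q := by
  constructor
  · rintro ⟨p', q', hp, hq, h⟩
    have e1 := tequiv_of_mk_eq hX1 hY1 hXr hYr hXt hp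
    have e2 := tequiv_of_mk_eq hX1 hY1 hXr hYr hXt hq
    exact tle_trans hXt (tle_trans hXt e1.2 _ h) _ e2.1
  · exact fun h => ⟨p, q, rfl, rfl, h⟩

end TleLemmas

inductive TT (U X Y Z : Type u) : Type u
  | zero : TT U X Y Z
  | a : U → TT U X Y Z
  | b : U → X → TT U X Y Z
  | c : Y → U → TT U X Y Z
  | d : U → Z → U → TT U X Y Z

namespace TT

variable {U X Y Z : Type u} [Monoid U]
variable (aX : X → U → X) (aY : U → Y → Y) (mk : X → Y → Z)

def mul : TT U X Y Z → TT U X Y Z → TT U X Y Z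
  | .a u, .a v => .a (u * v)
  | .a u, .b v x => .b (u * v) x
  | .b v x, .a u => .b v (aX x u)
  | .a u, .c y v => .c (aY u y) v
  | .c y v, .a u => .c y (v * u)
  | .a u, .d w z v => .d (u * w) z v
  | .d w z v, .a u => .d w z (v * u)
  | .b w x, .c y v => .d w (mk x y) v
  | _, _ => .zero

def ttMonoid (hX1 : ∀ x, aX x 1 = x) (hY1 : ∀ y, aY 1 y = y)
    (hXmul : ∀ x u v, aX x (u * v) = aX (aX x u) v)
    (hYmul : ∀ u v y, aY (u * v) y = aY u (aY v y))
    (hbal : ∀ x u y, mk (aX x u) y = mk x (aY u y)) : Monoid (TT U X Y Z) where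
  mul := mul aX aY mk
  one := .a 1
  mul_assoc p q r := by
    show mul aX aY mk (mul aX aY mk p q) r = mul aX aY mk p (mul aX aY mk q r)
    cases p <;> cases q <;> cases r <;>
      first
      | rfl
      | simp [mul, mul_assoc, hXmul, hYmul, hbal]
  one_mul p := by show mul aX aY mk (.a 1) p = p; cases p <;> first | rfl | simp [mul, hY1]
  mul_one p := by show mul aX aY mk p (.a 1) = p; cases p <;> first | rfl | simp [mul, hX1]

variable [PartialOrder U] [PartialOrder X] [PartialOrder Y] (lz : Z → Z → Prop)

def le : TT U X Y Z → TT U X Y Z → Prop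
  | .zero, .zero => True
  | .a u, .a v => u ≤ v
  | .b u x, .b v x' => u ≤ v ∧ x ≤ x'
  | .c y u, .c y' v => y ≤ y' ∧ u ≤ v
  | .d u z v, .d u' z' v' => u ≤ u' ∧ lz z z' ∧ v ≤ v'
  | _, _ => False

theorem le_b {u v : U} {x x' : X} (h1 : u ≤ v) (h2 : x ≤ x') :
    le (U := U) (X := X) (Y := Y) (Z := Z) lz (.b u x) (.b v x') :=
  show u ≤ v ∧ x ≤ x' from ⟨h1, h2⟩

theorem le_c {y y' : Y} {u v : U} (h1 : y ≤ y') (h2 : u ≤ v) :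
    le (U := U) (X := X) (Y := Y) (Z := Z) lz (.c y u) (.c y' v) :=
  show y ≤ y' ∧ u ≤ v from ⟨h1, h2⟩

theorem le_dz {u u' v v' : U} {z z' : Z}
    (h : le (U := U) (X := X) (Y := Y) (Z := Z) lz (.d u z v) (.d u' z' v')) :
    lz z z' :=
  (show u ≤ u' ∧ lz z z' ∧ v ≤ v' from h).2.1

def ttPO (hzr : ∀ z, lz z z)
    (hzt : ∀ z1 z2 z3, lz z1 z2 → lz z2 z3 → lz z1 z3)
    (hza : ∀ z1 z2, lz z1 z2 → lz z2 z1 → z1 = z2) : PartialOrder (TT U X Y Z) where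
  le := le lz
  le_refl p := by cases p <;> first | trivial | simp [le, hzr]
  le_trans p q r h1 h2 := by
    cases p <;> cases q <;> cases r <;> simp only [le] at h1 h2 ⊢ <;>
      first
      | trivial
      | exact le_trans h1 h2
      | exact ⟨le_trans h1.1 h2.1, le_trans h1.2 h2.2⟩
      | exact ⟨le_trans h1.1 h2.1, hzt _ _ _ h1.2.1 h2.2.1, le_trans h1.2.2 h2.2.2⟩
  le_antisymm p q h1 h2 := by
    cases p <;> cases q <;> simp only [le] at h1 h2 <;>
      first
      | rfl
      | exact congrArg TT.a (le_antisymm h1 h2)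
      | rw [le_antisymm h1.1 h2.1, le_antisymm h1.2 h2.2]
      | rw [le_antisymm h1.1 h2.1, hza _ _ h1.2.1 h2.2.1, le_antisymm h1.2.2 h2.2.2]

theorem ttCompat (hzr : ∀ z, lz z z)
    (hU : ∀ u v : U, u ≤ v → ∀ w : U, u * w ≤ v * w ∧ w * u ≤ w * v)
    (hXm : ∀ (x x' : X) (u : U), x ≤ x' → aX x u ≤ aX x' u)
    (hXa : ∀ (x : X) (u v : U), u ≤ v → aX x u ≤ aX x v)
    (hYm : ∀ (y y' : Y) (u : U), y ≤ y' → aY u y ≤ aY u y')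
    (hYa : ∀ (y : Y) (u v : U), u ≤ v → aY u y ≤ aY v y)
    (hmkm : ∀ x x' y y', x ≤ x' → y ≤ y' → lz (mk x y) (mk x' y')) :
    ∀ p q : TT U X Y Z, le lz p q →
      ∀ r, le lz (mul aX aY mk p r) (mul aX aY mk q r) ∧
        le lz (mul aX aY mk r p) (mul aX aY mk r q) := by
  intro p q h r
  cases p <;> cases q <;> simp only [le] at h <;> cases r <;>
    constructor <;> simp only [mul, le] <;>
    first
    | trivial
    | exact (hU _ _ h _).1
    | exact (hU _ _ h _).2
    | exact ⟨(hU _ _ h _).1, le_refl _⟩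
    | exact ⟨le_refl _, hXa _ _ _ h⟩
    | exact ⟨hYa _ _ _ h, le_refl _⟩
    | exact ⟨le_refl _, (hU _ _ h _).2⟩
    | exact ⟨(hU _ _ h _).1, hzr _, le_refl _⟩
    | exact ⟨le_refl _, hzr _, (hU _ _ h _).2⟩
    | exact ⟨h.1, hXm _ _ _ h.2⟩
    | exact ⟨(hU _ _ h.1 _).2, h.2⟩
    | exact ⟨h.1, hmkm _ _ _ _ h.2 (le_refl _), le_refl _⟩
    | exact ⟨h.1, (hU _ _ h.2 _).1⟩
    | exact ⟨hYm _ _ _ h.1, h.2⟩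
    | exact ⟨le_refl _, hmkm _ _ _ _ (le_refl _) h.1, h.2⟩
    | exact ⟨h.1, h.2.1, (hU _ _ h.2.2 _).1⟩
    | exact ⟨(hU _ _ h.1 _).2, h.2.1, h.2.2⟩

end TT

/-- if (U, S) is a weak poamalgamation pair in the category of pomonoids, then
U has the poextension property in S: for every right U-poset X and left U-poset Y the
canonical map X ⊗_U Y → X ⊗_U S ⊗_U Y, x ⊗ y ↦ x ⊗ 1 ⊗ y, is an order embedding. -/
theorem stmt_14 {S : Type u} [Monoid S] [PartialOrder S] (hS : IsPomonoid S)
    (U : Submonoid S)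
    (hpair : ∀ (T : Pomon.{u}) (φ : ↥U →* T.carrier),
      (∀ u u' : ↥U, u ≤ u' ↔ φ u ≤ φ u') →
      ∃ (W : Pomon.{u}) (θ₁ : S →* W.carrier) (θ₂ : T.carrier →* W.carrier),
        (∀ s s' : S, s ≤ s' ↔ θ₁ s ≤ θ₁ s') ∧
        (∀ t t' : T.carrier, t ≤ t' ↔ θ₂ t ≤ θ₂ t') ∧
        (∀ u : ↥U, θ₁ (u : S) = θ₂ (φ u))) :
    ∀ (X Y : Type u) [PartialOrder X] [PartialOrder Y]
      (aX : X → ↥U → X) (aY : ↥U → Y → Y),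
      IsRightSPoset ↥U X aX → IsLeftSPoset ↥U Y aY →
      ∀ (x x' : X) (y y' : Y),
        QuotLe
            (TEquiv (TLe (· ≤ ·) (· ≤ ·) aX (fun (u : ↥U) (s : S) => (u : S) * s))
              (· ≤ ·) (fun (p : X × S) (u : ↥U) => (p.1, p.2 * (u : S))) aY)
            (TLe (TLe (· ≤ ·) (· ≤ ·) aX (fun (u : ↥U) (s : S) => (u : S) * s))
              (· ≤ ·) (fun (p : X × S) (u : ↥U) => (p.1, p.2 * (u : S))) aY)
            (Quot.mk _ ((x, (1 : S)), y)) (Quot.mk _ ((x', (1 : S)), y')) ↔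
          QuotLe (TEquiv (· ≤ ·) (· ≤ ·) aX aY) (TLe (· ≤ ·) (· ≤ ·) aX aY)
            (Quot.mk _ (x, y)) (Quot.mk _ (x', y')) := by
  intro X Y instX instY aX aY hX hY x x' y y'
  have hS1 : ∀ s : S, (((1 : ↥U) : S)) * s = s := fun s => by
    rw [OneMemClass.coe_one, one_mul]
  have aXB_one : ∀ p : X × S,
      (fun (p : X × S) (u : ↥U) => (p.1, p.2 * (u : S))) p 1 = p := fun p => by
    simp
  -- facts about the middle tensor X ⊗ S
  have tXS_trans : ∀ {p q r : X × S},
      TLe (· ≤ ·) (· ≤ ·) aX (fun (u : ↥U) (s : S) => (u : S) * s) p q →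
      TLe (· ≤ ·) (· ≤ ·) aX (fun (u : ↥U) (s : S) => (u : S) * s) q r →
      TLe (· ≤ ·) (· ≤ ·) aX (fun (u : ↥U) (s : S) => (u : S) * s) p r :=
    fun h1 h2 => tle_trans (fun a b c (h : a ≤ b) (h' : b ≤ c) => le_trans h h') h1 _ h2
  have tXS_refl : ∀ p : X × S,
      TLe (· ≤ ·) (· ≤ ·) aX (fun (u : ↥U) (s : S) => (u : S) * s) p p :=
    tle_refl hX.act_one hS1 (fun _ => le_refl _) (fun _ => le_refl _)
  have tXS_trans' : ∀ a b c : X × S,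
      TLe (· ≤ ·) (· ≤ ·) aX (fun (u : ↥U) (s : S) => (u : S) * s) a b →
      TLe (· ≤ ·) (· ≤ ·) aX (fun (u : ↥U) (s : S) => (u : S) * s) b c →
      TLe (· ≤ ·) (· ≤ ·) aX (fun (u : ↥U) (s : S) => (u : S) * s) a c :=
    fun _ _ _ h h' => tXS_trans h h'
  -- facts about the small tensor X ⊗ Y
  have tXY_trans : ∀ {p q r : X × Y},
      TLe (· ≤ ·) (· ≤ ·) aX aY p q → TLe (· ≤ ·) (· ≤ ·) aX aY q r →
      TLe (· ≤ ·) (· ≤ ·) aX aY p r :=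
    fun h1 h2 => tle_trans (fun a b c (h : a ≤ b) (h' : b ≤ c) => le_trans h h') h1 _ h2
  have tXY_refl : ∀ p : X × Y, TLe (· ≤ ·) (· ≤ ·) aX aY p p :=
    tle_refl hX.act_one hY.one_act (fun _ => le_refl _) (fun _ => le_refl _)
  have tXY_eqv : ∀ {p q : X × Y},
      Quot.mk (TEquiv (· ≤ ·) (· ≤ ·) aX aY) p = Quot.mk (TEquiv (· ≤ ·) (· ≤ ·) aX aY) q →
      TEquiv (· ≤ ·) (· ≤ ·) aX aY p q :=
    fun h => tequiv_of_mk_eq hX.act_one hY.one_act (fun _ => le_refl _) (fun _ => le_refl _)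
      (fun x1 x2 x3 (a : x1 ≤ x2) (b : x2 ≤ x3) => le_trans a b) h
  have smalliff : ∀ p q : X × Y,
      QuotLe (TEquiv (· ≤ ·) (· ≤ ·) aX aY) (TLe (· ≤ ·) (· ≤ ·) aX aY)
        (Quot.mk _ p) (Quot.mk _ q) ↔ TLe (· ≤ ·) (· ≤ ·) aX aY p q :=
    fun p q => quotle_iff hX.act_one hY.one_act (fun _ => le_refl _) (fun _ => le_refl _)
      (fun x1 x2 x3 (a : x1 ≤ x2) (b : x2 ≤ x3) => le_trans a b) p q
  have bigiff : ∀ p q : (X × S) × Y,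
      QuotLe
          (TEquiv (TLe (· ≤ ·) (· ≤ ·) aX (fun (u : ↥U) (s : S) => (u : S) * s))
            (· ≤ ·) (fun (p : X × S) (u : ↥U) => (p.1, p.2 * (u : S))) aY)
          (TLe (TLe (· ≤ ·) (· ≤ ·) aX (fun (u : ↥U) (s : S) => (u : S) * s))
            (· ≤ ·) (fun (p : X × S) (u : ↥U) => (p.1, p.2 * (u : S))) aY)
          (Quot.mk _ p) (Quot.mk _ q) ↔
        TLe (TLe (· ≤ ·) (· ≤ ·) aX (fun (u : ↥U) (s : S) => (u : S) * s))
          (· ≤ ·) (fun (p : X × S) (u : ↥U) => (p.1, p.2 * (u : S))) aY p q :=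
    fun p q => quotle_iff aXB_one hY.one_act tXS_refl (fun _ => le_refl _)
      tXS_trans' p q
  -- the easy direction: schemes over X ⊗ Y transfer to X ⊗ S ⊗ Y
  have easy : ∀ p q : X × Y, TLe (· ≤ ·) (· ≤ ·) aX aY p q →
      TLe (TLe (· ≤ ·) (· ≤ ·) aX (fun (u : ↥U) (s : S) => (u : S) * s))
        (· ≤ ·) (fun (p : X × S) (u : ↥U) => (p.1, p.2 * (u : S))) aY
        ((p.1, (1 : S)), p.2) ((q.1, (1 : S)), q.2) := by
    intro p q h
    induction h with
    | base p q x₁ s t h1 h2 h3 =>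
      refine TLe.base _ _ (x₁, (1 : S)) s t ?_ h2 ?_
      · exact TLe.base _ _ x₁ s 1 h1 (by simp) (by simp [hX.act_one])
      · exact TLe.base _ _ x₁ 1 t (by simp [hX.act_one]) (by simp) h3
    | step p q x₁ s t y₂ h1 h2 h3 ih =>
      refine TLe.step _ _ (x₁, (1 : S)) s t y₂ ?_ h2 ?_
      · exact TLe.base _ _ x₁ s 1 h1 (by simp) (by simp [hX.act_one])
      · exact tle_mono_left tXS_trans'
          (p := ((aX x₁ t, (1 : S)), y₂)) ih ((x₁, (1 : S) * (t : S)))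
          (TLe.base ((x₁, (1 : S) * (t : S))) ((aX x₁ t, (1 : S))) x₁ 1 t
            (by simp [hX.act_one]) (by simp) (le_refl _))
  constructor
  · -- hard direction
    intro hbig
    have hb := (bigiff _ _).1 hbig
    -- the tensor product X ⊗ Y as a partially ordered set
    have lz_refl : ∀ z, QuotLe (TEquiv (· ≤ ·) (· ≤ ·) aX aY)
        (TLe (· ≤ ·) (· ≤ ·) aX aY) z z := by
      intro z
      induction z using Quot.ind with
      | _ p => exact ⟨p, p, rfl, rfl, tXY_refl p⟩
    have lz_trans : ∀ z1 z2 z3, QuotLe (TEquiv (· ≤ ·) (· ≤ ·) aX aY)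
        (TLe (· ≤ ·) (· ≤ ·) aX aY) z1 z2 →
        QuotLe (TEquiv (· ≤ ·) (· ≤ ·) aX aY) (TLe (· ≤ ·) (· ≤ ·) aX aY) z2 z3 →
        QuotLe (TEquiv (· ≤ ·) (· ≤ ·) aX aY) (TLe (· ≤ ·) (· ≤ ·) aX aY) z1 z3 := by
      rintro z1 z2 z3 ⟨p, q, hp, hq, hle⟩ ⟨p', q', hp', hq', hle'⟩
      refine ⟨p, q', hp, hq', ?_⟩
      exact tXY_trans hle (tXY_trans (tXY_eqv (hq.trans hp'.symm)).1 hle')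
    have lz_antisymm : ∀ z1 z2, QuotLe (TEquiv (· ≤ ·) (· ≤ ·) aX aY)
        (TLe (· ≤ ·) (· ≤ ·) aX aY) z1 z2 →
        QuotLe (TEquiv (· ≤ ·) (· ≤ ·) aX aY) (TLe (· ≤ ·) (· ≤ ·) aX aY) z2 z1 →
        z1 = z2 := by
      rintro z1 z2 ⟨p, q, hp, hq, hle⟩ ⟨p', q', hp', hq', hle'⟩
      rw [← hp, ← hq]
      exact Quot.sound ⟨hle,
        tXY_trans (tXY_eqv (hq.trans hp'.symm)).1
          (tXY_trans hle' (tXY_eqv (hq'.trans hp.symm)).1)⟩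
    have hbal : ∀ (x0 : X) (u : ↥U) (y0 : Y),
        Quot.mk (TEquiv (· ≤ ·) (· ≤ ·) aX aY) (aX x0 u, y0) =
          Quot.mk (TEquiv (· ≤ ·) (· ≤ ·) aX aY) (x0, aY u y0) := fun x0 u y0 =>
      Quot.sound
        ⟨tle_balance₁ hX.act_one hY.one_act (fun _ => le_refl _) (fun _ => le_refl _) x0 u y0,
         tle_balance₂ hX.act_one hY.one_act (fun _ => le_refl _) (fun _ => le_refl _) x0 u y0⟩
    have hmkm : ∀ (x0 x0' : X) (y0 y0' : Y), x0 ≤ x0' → y0 ≤ y0' →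
        QuotLe (TEquiv (· ≤ ·) (· ≤ ·) aX aY) (TLe (· ≤ ·) (· ≤ ·) aX aY)
          (Quot.mk _ (x0, y0)) (Quot.mk _ (x0', y0')) :=
      fun _ _ _ _ hx hy =>
        ⟨_, _, rfl, rfl, tle_pair hX.act_one hY.one_act (fun _ => le_refl _) hx hy⟩
    have hU : ∀ u v : ↥U, u ≤ v → ∀ w : ↥U, u * w ≤ v * w ∧ w * u ≤ w * v := by
      intro u v h w
      have h' : (u : S) ≤ (v : S) := h
      exact ⟨(hS h' (w : S)).1, (hS h' (w : S)).2⟩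
    -- the pomonoid T
    letI TmonI : Monoid (TT ↥U X Y (Quot (TEquiv (· ≤ ·) (· ≤ ·) aX aY))) :=
      TT.ttMonoid aX aY (fun x0 y0 => Quot.mk _ (x0, y0)) hX.act_one hY.one_act
        hX.act_mul hY.mul_act hbal
    letI TpoI : PartialOrder (TT ↥U X Y (Quot (TEquiv (· ≤ ·) (· ≤ ·) aX aY))) :=
      TT.ttPO (QuotLe (TEquiv (· ≤ ·) (· ≤ ·) aX aY) (TLe (· ≤ ·) (· ≤ ·) aX aY))
        lz_refl lz_trans lz_antisymm
    let T : Pomon.{u} :=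
      { carrier := TT ↥U X Y (Quot (TEquiv (· ≤ ·) (· ≤ ·) aX aY))
        compat := fun a b h c =>
          TT.ttCompat aX aY (fun x0 y0 => Quot.mk _ (x0, y0))
            (QuotLe (TEquiv (· ≤ ·) (· ≤ ·) aX aY) (TLe (· ≤ ·) (· ≤ ·) aX aY))
            lz_refl hU (fun _ _ u hh => hX.mono_act u hh) (fun x0 _ _ hh => hX.act_mono x0 hh)
            (fun _ _ u hh => hY.mono_act u hh) (fun y0 _ _ hh => hY.act_mono y0 hh)
            hmkm a b h c }
    let φ : ↥U →* T.carrier :=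
      { toFun := TT.a, map_one' := rfl, map_mul' := fun u v => rfl }
    obtain ⟨W, θ₁, θ₂, hθ₁, hθ₂, hθU⟩ := hpair T φ (fun u u' => Iff.rfl)
    have θ₂mono : ∀ {t t' : T.carrier},
        TT.le (QuotLe (TEquiv (· ≤ ·) (· ≤ ·) aX aY) (TLe (· ≤ ·) (· ≤ ·) aX aY)) t t' →
        θ₂ t ≤ θ₂ t' := fun h => (hθ₂ _ _).1 h
    have key1 : ∀ (x0 : X) (u : ↥U),
        θ₂ (TT.b 1 (aX x0 u)) = θ₂ (TT.b 1 x0) * θ₁ (u : S) := by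
      intro x0 u
      have e : (TT.b (1 : ↥U) (aX x0 u) : T.carrier) = TT.b 1 x0 * TT.a u := rfl
      rw [e, map_mul, hθU u]
      rfl
    have key2 : ∀ (y0 : Y) (u : ↥U),
        θ₂ (TT.c (aY u y0) 1) = θ₁ (u : S) * θ₂ (TT.c y0 1) := by
      intro y0 u
      have e : (TT.c (aY u y0) (1 : ↥U) : T.carrier) = TT.a u * TT.c y0 1 := rfl
      rw [e, map_mul, hθU u]
      rfl
    have key3 : ∀ (x0 : X) (y0 : Y),
        θ₂ (TT.d 1 (Quot.mk (TEquiv (· ≤ ·) (· ≤ ·) aX aY) (x0, y0)) 1) =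
          θ₂ (TT.b 1 x0) * θ₂ (TT.c y0 1) := by
      intro x0 y0
      have e : (TT.d (1 : ↥U) (Quot.mk (TEquiv (· ≤ ·) (· ≤ ·) aX aY) (x0, y0)) 1 :
          T.carrier) = TT.b 1 x0 * TT.c y0 1 := rfl
      rw [e, map_mul]
    have monM : ∀ {p q : X × S},
        TLe (· ≤ ·) (· ≤ ·) aX (fun (u : ↥U) (s : S) => (u : S) * s) p q →
        θ₂ (TT.b 1 p.1) * θ₁ p.2 ≤ θ₂ (TT.b 1 q.1) * θ₁ q.2 := by
      intro p q h
      induction h with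
      | base p q x₁ s t h1 h2 h3 =>
        calc θ₂ (TT.b 1 p.1) * θ₁ p.2
            ≤ θ₂ (TT.b 1 (aX x₁ s)) * θ₁ p.2 := (W.compat (θ₂mono (TT.le_b _ (le_refl _) h1)) _).1
          _ = θ₂ (TT.b 1 x₁) * θ₁ ((s : S) * p.2) := by
              simp only [key1, map_mul, mul_assoc]
          _ ≤ θ₂ (TT.b 1 x₁) * θ₁ ((t : S) * q.2) := (W.compat ((hθ₁ _ _).1 h2) _).2
          _ = θ₂ (TT.b 1 (aX x₁ t)) * θ₁ q.2 := by
              simp only [key1, map_mul, mul_assoc]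
          _ ≤ θ₂ (TT.b 1 q.1) * θ₁ q.2 := (W.compat (θ₂mono (TT.le_b _ (le_refl _) h3)) _).1
      | step p q x₁ s t y₂ h1 h2 h3 ih =>
        calc θ₂ (TT.b 1 p.1) * θ₁ p.2
            ≤ θ₂ (TT.b 1 (aX x₁ s)) * θ₁ p.2 := (W.compat (θ₂mono (TT.le_b _ (le_refl _) h1)) _).1
          _ = θ₂ (TT.b 1 x₁) * θ₁ ((s : S) * p.2) := by
              simp only [key1, map_mul, mul_assoc]
          _ ≤ θ₂ (TT.b 1 x₁) * θ₁ ((t : S) * y₂) := (W.compat ((hθ₁ _ _).1 h2) _).2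
          _ = θ₂ (TT.b 1 (aX x₁ t)) * θ₁ y₂ := by
              simp only [key1, map_mul, mul_assoc]
          _ ≤ _ := ih
    have monBig : ∀ {P Q : (X × S) × Y},
        TLe (TLe (· ≤ ·) (· ≤ ·) aX (fun (u : ↥U) (s : S) => (u : S) * s))
          (· ≤ ·) (fun (p : X × S) (u : ↥U) => (p.1, p.2 * (u : S))) aY P Q →
        θ₂ (TT.b 1 P.1.1) * θ₁ P.1.2 * θ₂ (TT.c P.2 1) ≤
          θ₂ (TT.b 1 Q.1.1) * θ₁ Q.1.2 * θ₂ (TT.c Q.2 1) := by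
      intro P Q h
      induction h with
      | base P Q x₁b s t h1 h2 h3 =>
        calc θ₂ (TT.b 1 P.1.1) * θ₁ P.1.2 * θ₂ (TT.c P.2 1)
            ≤ θ₂ (TT.b 1 x₁b.1) * θ₁ (x₁b.2 * (s : S)) * θ₂ (TT.c P.2 1) :=
              (W.compat (monM h1) _).1
          _ = θ₂ (TT.b 1 x₁b.1) * θ₁ x₁b.2 * θ₂ (TT.c (aY s P.2) 1) := by
              simp only [key2, map_mul, mul_assoc]
          _ ≤ θ₂ (TT.b 1 x₁b.1) * θ₁ x₁b.2 * θ₂ (TT.c (aY t Q.2) 1) :=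
              (W.compat (θ₂mono (TT.le_c _ h2 (le_refl _))) _).2
          _ = θ₂ (TT.b 1 x₁b.1) * θ₁ (x₁b.2 * (t : S)) * θ₂ (TT.c Q.2 1) := by
              simp only [key2, map_mul, mul_assoc]
          _ ≤ θ₂ (TT.b 1 Q.1.1) * θ₁ Q.1.2 * θ₂ (TT.c Q.2 1) := (W.compat (monM h3) _).1
      | step P Q x₁b s t y₂ h1 h2 h3 ih =>
        calc θ₂ (TT.b 1 P.1.1) * θ₁ P.1.2 * θ₂ (TT.c P.2 1)
            ≤ θ₂ (TT.b 1 x₁b.1) * θ₁ (x₁b.2 * (s : S)) * θ₂ (TT.c P.2 1) :=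
              (W.compat (monM h1) _).1
          _ = θ₂ (TT.b 1 x₁b.1) * θ₁ x₁b.2 * θ₂ (TT.c (aY s P.2) 1) := by
              simp only [key2, map_mul, mul_assoc]
          _ ≤ θ₂ (TT.b 1 x₁b.1) * θ₁ x₁b.2 * θ₂ (TT.c (aY t y₂) 1) :=
              (W.compat (θ₂mono (TT.le_c _ h2 (le_refl _))) _).2
          _ = θ₂ (TT.b 1 x₁b.1) * θ₁ (x₁b.2 * (t : S)) * θ₂ (TT.c y₂ 1) := by
              simp only [key2, map_mul, mul_assoc]
          _ ≤ _ := ih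
    have hw := monBig hb
    simp only [map_one, mul_one] at hw
    rw [← key3 x y, ← key3 x' y'] at hw
    have hT : TT.le (QuotLe (TEquiv (· ≤ ·) (· ≤ ·) aX aY) (TLe (· ≤ ·) (· ≤ ·) aX aY))
        (TT.d 1 (Quot.mk (TEquiv (· ≤ ·) (· ≤ ·) aX aY) (x, y)) 1)
        (TT.d 1 (Quot.mk (TEquiv (· ≤ ·) (· ≤ ·) aX aY) (x', y')) 1) := (hθ₂ _ _).2 hw
    exact TT.le_dz _ hT
  · -- easy direction
    intro hsmall
    have h := (smalliff _ _).1 hsmall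
    exact ⟨((x, 1), y), ((x', 1), y'), rfl, rfl, easy (x, y) (x', y') h⟩
end

section
/- Let U be a subpomonoid of a pomonoid S. If U is left pounitary in S, then U has the right poextension property in S; i.e., for every left U-poset X the map X → S ⊗_U X, x ↦ 1 ⊗ x, is an order embedding. (Dually, right pounitary implies the left poextension property.) -/
universe u v

/-- `U` is left pounitary in `S`: whenever `u ≤ u₁s₁`, `u₁'s₁ ≤ u₂s₂`, …, `uₙ'sₙ ≤ v`
with `u, v, uᵢ, uᵢ' ∈ U`, then all `sᵢ ∈ U`. -/
def LeftPounitary {S : Type*} [Monoid S] [PartialOrder S] (U : Submonoid S) : Prop :=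
  ∀ (n : ℕ) (s : Fin (n + 1) → S) (u u' : Fin (n + 1) → ↥U) (a b : ↥U),
    (a : S) ≤ (u 0 : S) * s 0 →
    (∀ i : Fin n, (u' i.castSucc : S) * s i.castSucc ≤ (u i.succ : S) * s i.succ) →
    (u' (Fin.last n) : S) * s (Fin.last n) ≤ (b : S) →
    ∀ i, s i ∈ U


section helpers
variable {U : Type*} {X Y : Type*} [PartialOrder X] [PartialOrder Y]
  (aX : X → U → X) (aY : U → Y → Y)

lemma TLe_mono_left {p q : X × Y}
    (h : TLe (· ≤ ·) (· ≤ ·) aX aY p q) :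
    ∀ a : X, a ≤ p.1 → TLe (· ≤ ·) (· ≤ ·) aX aY (a, p.2) q := by
  induction h with
  | base p q x₁ s t h1 h2 h3 =>
      exact fun a ha => TLe.base _ _ x₁ s t (le_trans ha h1) h2 h3
  | step p q x₁ s t y₂ h1 h2 h3 ih =>
      exact fun a ha => TLe.step _ _ x₁ s t y₂ (le_trans ha h1) h2 h3

lemma TLe_trans {p q r : X × Y}
    (h : TLe (· ≤ ·) (· ≤ ·) aX aY p q) (h' : TLe (· ≤ ·) (· ≤ ·) aX aY q r) :
    TLe (· ≤ ·) (· ≤ ·) aX aY p r := by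
  induction h with
  | base p q x₁ s t h1 h2 h3 =>
      exact TLe.step _ _ x₁ s t q.2 h1 h2 (TLe_mono_left aX aY h' _ h3)
  | step p q x₁ s t y₂ h1 h2 h3 ih =>
      exact TLe.step _ _ x₁ s t y₂ h1 h2 (ih h')

lemma TLe_refl (e : U) (hXone : ∀ x : X, aX x e = x) (p : X × Y) :
    TLe (· ≤ ·) (· ≤ ·) aX aY p p :=
  TLe.base p p p.1 e e (by rw [hXone]) le_rfl (by rw [hXone])

lemma TLe_scheme {p q : X × Y}
    (h : TLe (· ≤ ·) (· ≤ ·) aX aY p q) :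
    ∃ (n : ℕ) (xs : Fin (n+1) → X) (ss ts : Fin (n+1) → U) (ys : Fin (n+2) → Y),
      ys 0 = p.2 ∧ ys (Fin.last (n+1)) = q.2 ∧
      p.1 ≤ aX (xs 0) (ss 0) ∧
      (∀ j : Fin (n+1), aY (ss j) (ys j.castSucc) ≤ aY (ts j) (ys j.succ)) ∧
      (∀ i : Fin n, aX (xs i.castSucc) (ts i.castSucc) ≤ aX (xs i.succ) (ss i.succ)) ∧
      aX (xs (Fin.last n)) (ts (Fin.last n)) ≤ q.1 := by
  induction h with
  | base p q x₁ s t h1 h2 h3 =>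
      refine ⟨0, fun _ => x₁, fun _ => s, fun _ => t, Fin.cons p.2 (fun _ => q.2),
        rfl, rfl, h1, ?_, fun i => i.elim0, h3⟩
      intro j
      have hj : j = 0 := Fin.fin_one_eq_zero j
      subst hj
      simpa [Fin.cons_succ, Fin.castSucc_zero] using h2
  | step p q x₁ s t y₂ h1 h2 h3 ih =>
      obtain ⟨n, xs, ss, ts, ys, hy0, hyl, hx0, hmid, hlink, hlast⟩ := ih
      refine ⟨n+1, Fin.cons x₁ xs, Fin.cons s ss, Fin.cons t ts, Fin.cons p.2 ys,
        rfl, ?_, ?_, ?_, ?_, ?_⟩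
      · rw [← Fin.succ_last, Fin.cons_succ, hyl]
      · simpa using h1
      · intro j
        refine Fin.cases ?_ (fun i => ?_) j
        · simpa [hy0] using h2
        · simpa [Fin.cons_succ, ← Fin.succ_castSucc] using hmid i
      · intro i
        refine Fin.cases ?_ (fun k => ?_) i
        · simpa [hy0] using hx0
        · simpa [Fin.cons_succ, ← Fin.succ_castSucc] using hlink k
      · rw [← Fin.succ_last, Fin.cons_succ, Fin.cons_succ]
        exact hlast

end helpers

/-- if `U` is left pounitary in `S` then `U` has the right poextension property
in `S`: for every right `U`-poset `X`, the canonical map `X → X ⊗_U S`, `x ↦ x ⊗ 1`,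
is an order embedding. -/
theorem stmt_15 {S : Type u} [Monoid S] [PartialOrder S] (hS : IsPomonoid S)
    (U : Submonoid S) (hU : LeftPounitary U) :
    ∀ (X : Type u) [PartialOrder X] (aX : X → ↥U → X), IsRightSPoset ↥U X aX →
      ∀ x x' : X,
        QuotLe (TEquiv (· ≤ ·) (· ≤ ·) aX (fun (u : ↥U) (t : S) => (u : S) * t))
          (TLe (· ≤ ·) (· ≤ ·) aX (fun (u : ↥U) (t : S) => (u : S) * t))
          (Quot.mk _ (x, (1 : S))) (Quot.mk _ (x', (1 : S))) ↔ x ≤ x' := by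
  intro X _ aX hX x x'
  set aY : ↥U → S → S := fun (u : ↥U) (t : S) => (u : S) * t with haY
  have hequiv : Equivalence (TEquiv (· ≤ ·) (· ≤ ·) aX aY) := by
    refine ⟨fun p => ⟨?_, ?_⟩, fun h => ⟨h.2, h.1⟩,
      fun a b => ⟨TLe_trans aX aY a.1 b.1, TLe_trans aX aY b.2 a.2⟩⟩ <;>
      exact TLe_refl aX aY 1 hX.act_one _
  constructor
  · rintro ⟨p, q, hp, hq, hpq⟩
    have hp' : TEquiv (· ≤ ·) (· ≤ ·) aX aY p (x, (1 : S)) :=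
      (Equivalence.eqvGen_iff hequiv).1 (Quot.eqvGen_exact hp)
    have hq' : TEquiv (· ≤ ·) (· ≤ ·) aX aY q (x', (1 : S)) :=
      (Equivalence.eqvGen_iff hequiv).1 (Quot.eqvGen_exact hq)
    have h : TLe (· ≤ ·) (· ≤ ·) aX aY (x, (1 : S)) (x', (1 : S)) :=
      TLe_trans aX aY (TLe_trans aX aY hp'.2 hpq) hq'.1
    obtain ⟨n, xs, ss, ts, ys, hy0, hyl, hx0, hmid, hlink, hlast⟩ := TLe_scheme aX aY h
    simp only [haY] at hmid
    have hy0' : ys 0 = 1 := hy0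
    have hyl' : ys (Fin.last (n+1)) = 1 := hyl
    -- all interior elements of the chain lie in U
    have hint : ∀ i : Fin n, ys i.succ.castSucc ∈ U := by
      cases n with
      | zero => exact fun i => i.elim0
      | succ m =>
        refine hU m (fun k => ys k.succ.castSucc) (fun k => ts k.castSucc)
          (fun k => ss k.succ) (ss 0) (ts (Fin.last (m+1))) ?_ ?_ ?_
        · have e1 : ((0 : Fin (m+2)).castSucc : Fin (m+3)) = 0 := by
            ext; simp
          have e2 : ((0 : Fin (m+2)).succ : Fin (m+3)) = (0 : Fin (m+1)).succ.castSucc := by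
            ext; simp
          have := hmid 0
          rw [e1, e2, hy0'] at this
          simpa [Fin.castSucc_zero] using this
        · intro i
          have e1 : (i.castSucc.succ : Fin (m+2)) = i.succ.castSucc := Fin.succ_castSucc _
          have e2 : ((i.castSucc.succ : Fin (m+2)).succ : Fin (m+3))
              = (i.succ.succ : Fin (m+2)).castSucc := by
            ext; simp
          have := hmid i.castSucc.succ
          rw [e2] at this
          calc (ss i.castSucc.succ : S) * ys i.castSucc.succ.castSucc
              ≤ (ts i.castSucc.succ : S) * ys i.succ.succ.castSucc := this
            _ = (ts i.succ.castSucc : S) * ys i.succ.succ.castSucc := by rw [e1]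
        · have e1 : ((Fin.last m).succ : Fin (m+2)) = Fin.last (m+1) := Fin.succ_last m
          have e2 : ((Fin.last (m+1)).succ : Fin (m+3)) = Fin.last (m+2) := Fin.succ_last _
          have := hmid (Fin.last (m+1))
          rw [e2, hyl'] at this
          show (ss (Fin.last m).succ : S) * ys ((Fin.last m).succ).castSucc
            ≤ (ts (Fin.last (m+1)) : S)
          rw [e1]
          simpa using this
    have hysU : ∀ j : Fin (n+2), ys j ∈ U := by
      intro j
      rcases Nat.lt_or_ge 0 j.val with hjpos | hjz
      · rcases Nat.lt_or_ge j.val (n+1) with hjlt | hjge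
        · have hn : 0 < n := by omega
          have hji : j = (⟨j.val - 1, by omega⟩ : Fin n).succ.castSucc := by
            ext; simp; omega
          rw [hji]; exact hint _
        · have : j = Fin.last (n+1) := by
            ext; simp only [Fin.val_last]; omega
          rw [this, hyl']; exact one_mem U
      · have : j = 0 := by
          ext; simp only [Fin.val_zero]; omega
        rw [this, hy0']; exact one_mem U
    set Yh : Fin (n+2) → ↥U := fun j => ⟨ys j, hysU j⟩ with hYh
    have hmidU : ∀ j : Fin (n+1), ss j * Yh j.castSucc ≤ ts j * Yh j.succ := by
      intro j
      have : ((ss j * Yh j.castSucc : ↥U) : S) ≤ ((ts j * Yh j.succ : ↥U) : S) := by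
        simpa [hYh] using hmid j
      exact this
    have hY0 : Yh 0 = 1 := Subtype.ext (by simpa [hYh] using hy0')
    have hYl : Yh (Fin.last (n+1)) = 1 := Subtype.ext (by simpa [hYh] using hyl')
    have key : ∀ j : Fin (n+1), x ≤ aX (xs j) (ss j * Yh j.castSucc) := by
      intro j
      induction j using Fin.induction with
      | zero =>
          rw [Fin.castSucc_zero, hY0, mul_one]
          exact hx0
      | succ i ih =>
          calc x ≤ aX (xs i.castSucc) (ss i.castSucc * Yh i.castSucc.castSucc) := ih
            _ ≤ aX (xs i.castSucc) (ts i.castSucc * Yh i.castSucc.succ) :=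
                hX.act_mono _ (hmidU i.castSucc)
            _ = aX (aX (xs i.castSucc) (ts i.castSucc)) (Yh i.castSucc.succ) :=
                hX.act_mul _ _ _
            _ ≤ aX (aX (xs i.succ) (ss i.succ)) (Yh i.castSucc.succ) :=
                hX.mono_act _ (hlink i)
            _ = aX (xs i.succ) (ss i.succ * Yh i.castSucc.succ) := (hX.act_mul _ _ _).symm
            _ = aX (xs i.succ) (ss i.succ * Yh i.succ.castSucc) := by
                rw [Fin.succ_castSucc]
    calc x ≤ aX (xs (Fin.last n)) (ss (Fin.last n) * Yh (Fin.last n).castSucc) :=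
            key (Fin.last n)
      _ ≤ aX (xs (Fin.last n)) (ts (Fin.last n) * Yh (Fin.last n).succ) :=
            hX.act_mono _ (hmidU (Fin.last n))
      _ = aX (xs (Fin.last n)) (ts (Fin.last n)) := by
            rw [Fin.succ_last, hYl, mul_one]
      _ ≤ x' := hlast
  · intro h
    refine ⟨(x, (1 : S)), (x', (1 : S)), rfl, rfl, ?_⟩
    exact TLe.base _ _ x' 1 1 (by simpa [hX.act_one] using h) le_rfl
      (by simp [hX.act_one])
end

section
/- Let U be a subpomonoid of a pomonoid S and let f : X → Y be a lower strongly right pounitary U-poset morphism between right U-posets. If A is a left U-poset and y ⊗ a ≤ f(x) ⊗ a' in Y ⊗_U A, then y ∈ im(f). -/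
universe u v

section Aux

variable {U X Y : Type*} [PartialOrder X] [PartialOrder Y]

theorem tle_mono_left_s16 (aX : X → U → X) (aY : U → Y → Y) {q r : X × Y} {z : X}
    (hz : z ≤ q.1) (h : TLe (· ≤ ·) (· ≤ ·) aX aY q r) :
    TLe (· ≤ ·) (· ≤ ·) aX aY (z, q.2) r := by
  cases h with
  | base _ _ x₁ s t h1 h2 h3 => exact TLe.base _ _ x₁ s t (le_trans hz h1) h2 h3
  | step _ _ x₁ s t y₂ h1 h2 h3 => exact TLe.step _ _ x₁ s t y₂ (le_trans hz h1) h2 h3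

theorem tle_trans_s16 (aX : X → U → X) (aY : U → Y → Y) {p q r : X × Y}
    (hpq : TLe (· ≤ ·) (· ≤ ·) aX aY p q) (hqr : TLe (· ≤ ·) (· ≤ ·) aX aY q r) :
    TLe (· ≤ ·) (· ≤ ·) aX aY p r := by
  induction hpq with
  | base p q x₁ s t h1 h2 h3 =>
      exact TLe.step p r x₁ s t q.2 h1 h2 (tle_mono_left_s16 aX aY h3 hqr)
  | step p q x₁ s t y₂ h1 h2 _ ih =>
      exact TLe.step p r x₁ s t y₂ h1 h2 (ih hqr)

theorem tle_refl_s16 [Monoid U] (aX : X → U → X) (aY : U → Y → Y)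
    (hone : ∀ x, aX x 1 = x) (p : X × Y) :
    TLe (· ≤ ·) (· ≤ ·) aX aY p p :=
  TLe.base p p p.1 1 1 (by rw [hone]) le_rfl (by rw [hone])

theorem teqvgen [Monoid U] (aX : X → U → X) (aY : U → Y → Y)
    (hone : ∀ x, aX x 1 = x) {p q : X × Y}
    (h : Relation.EqvGen (TEquiv (· ≤ ·) (· ≤ ·) aX aY) p q) :
    TEquiv (· ≤ ·) (· ≤ ·) aX aY p q := by
  induction h with
  | rel _ _ h => exact h
  | refl _ => exact ⟨tle_refl_s16 aX aY hone _, tle_refl_s16 aX aY hone _⟩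
  | symm _ _ _ ih => exact ⟨ih.2, ih.1⟩
  | trans _ _ _ _ _ ih1 ih2 =>
      exact ⟨tle_trans_s16 aX aY ih1.1 ih2.1, tle_trans_s16 aX aY ih2.2 ih1.2⟩

end Aux

/-- if `f : X → Y` is a lower strongly right pounitary `U`-poset morphism and
`y ⊗ a ≤ f(x) ⊗ a'` in `Y ⊗_U A` then `y ∈ im f`. -/
theorem stmt_16 {S X Y A : Type u} [Monoid S] [PartialOrder S] (hS : IsPomonoid S)
    (U : Submonoid S) [PartialOrder X] [PartialOrder Y] [PartialOrder A]
    (aX : X → ↥U → X) (aY : Y → ↥U → Y) (aA : ↥U → A → A)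
    (hX : IsRightSPoset ↥U X aX) (hY : IsRightSPoset ↥U Y aY) (hA : IsLeftSPoset ↥U A aA)
    (f : X → Y) (hfm : Monotone f) (hfe : ∀ x u, f (aX x u) = aY (f x) u)
    (hlsrp : ∀ (y : Y) (u : ↥U) (x : X), aY y u ≤ f x → y ∈ Set.range f)
    (y : Y) (a a' : A) (x : X)
    (h : QuotLe (TEquiv (· ≤ ·) (· ≤ ·) aY aA) (TLe (· ≤ ·) (· ≤ ·) aY aA)
      (Quot.mk _ (y, a)) (Quot.mk _ (f x, a'))) :
    y ∈ Set.range f := by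
  obtain ⟨p, q, hp, hq, hpq⟩ := h
  have hp' := teqvgen aY aA hY.act_one (Quot.eqvGen_exact hp)
  have hq' := teqvgen aY aA hY.act_one (Quot.eqvGen_exact hq)
  have main : TLe (· ≤ ·) (· ≤ ·) aY aA (y, a) (f x, a') :=
    tle_trans_s16 aY aA hp'.2 (tle_trans_s16 aY aA hpq hq'.1)
  have range_step : ∀ (y₁ : Y) (s : ↥U) (z : Y), z ≤ aY y₁ s → y₁ ∈ Set.range f →
      z ∈ Set.range f := by
    intro y₁ s z hz ⟨w, hw⟩
    refine hlsrp z 1 (aX w s) ?_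
    rw [hY.act_one, hfe]
    exact hz.trans (le_of_eq (by rw [hw]))
  have key : ∀ p q : Y × A, TLe (· ≤ ·) (· ≤ ·) aY aA p q → q.1 ∈ Set.range f →
      p.1 ∈ Set.range f := by
    intro p q hpq
    induction hpq with
    | base p q y₁ s t h1 h2 h3 =>
        intro ⟨w, hw⟩
        exact range_step y₁ s p.1 h1 (hlsrp y₁ t w (hw ▸ h3))
    | step p q y₁ s t y₂ h1 h2 _ ih =>
        intro hq
        obtain ⟨w, hw⟩ := ih hq
        exact range_step y₁ s p.1 h1 (hlsrp y₁ t w (le_of_eq hw.symm))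
  exact key (y, a) (f x, a') main ⟨x, rfl⟩
end

section
/- Let U be a subpomonoid of a pomonoid S and let f : X → Y be a right pounitary U-poset morphism that is an order embedding. Then the induced map f ⊗ 1 : X ⊗_U S → Y ⊗_U S is an order embedding. -/
universe u v

section TLeAux

variable {U X Y : Type*} {leX : X → X → Prop} {leY : Y → Y → Prop}
  {aX : X → U → X} {aY : U → Y → Y}

theorem TLe.trans' (htrans : ∀ (a b c : X), leX a b → leX b c → leX a c)
    {p q : X × Y} (h1 : TLe leX leY aX aY p q) :
    ∀ {r : X × Y}, TLe leX leY aX aY q r → TLe leX leY aX aY p r := by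
  induction h1 with
  | base p' q' x₁ s t ha hb hc =>
      intro r h2
      cases h2 with
      | base _ _ x₂ s₂ t₂ h1' h2' h3' =>
          exact .step p' r x₁ s t q'.2 ha hb
            (.base (aX x₁ t, q'.2) r x₂ s₂ t₂ (htrans _ _ _ hc h1') h2' h3')
      | step _ _ x₂ s₂ t₂ y₂' h1' h2' h3' =>
          exact .step p' r x₁ s t q'.2 ha hb
            (.step (aX x₁ t, q'.2) r x₂ s₂ t₂ y₂' (htrans _ _ _ hc h1') h2' h3')
  | step p' q' x₁ s t y₂ ha hb _ ih =>
      intro r h2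
      exact .step p' r x₁ s t y₂ ha hb (ih h2)

theorem TLe.refl' (one : U) (hone : ∀ a : X, aX a one = a)
    (hreflX : ∀ a : X, leX a a) (hreflY : ∀ b : Y, leY (aY one b) (aY one b))
    (p : X × Y) : TLe leX leY aX aY p p :=
  .base p p p.1 one one (by rw [hone]; exact hreflX _) (hreflY _)
    (by rw [hone]; exact hreflX _)

/-- Extract a `Fin`-indexed scheme from a `TLe` derivation. -/
theorem TLe.extract {p q : X × Y} (h : TLe leX leY aX aY p q) :
    ∃ (n : ℕ) (y : Fin (n + 1) → X) (u u' : Fin (n + 1) → U) (σ : Fin (n + 2) → Y),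
      σ 0 = p.2 ∧ σ (Fin.last (n + 1)) = q.2 ∧
      leX p.1 (aX (y 0) (u 0)) ∧
      (∀ i : Fin n, leX (aX (y i.castSucc) (u' i.castSucc)) (aX (y i.succ) (u i.succ))) ∧
      leX (aX (y (Fin.last n)) (u' (Fin.last n))) q.1 ∧
      (∀ i : Fin (n + 1), leY (aY (u i) (σ i.castSucc)) (aY (u' i) (σ i.succ))) := by
  induction h with
  | base p' q' x₁ s t h1 h2 h3 =>
      refine ⟨0, fun _ => x₁, fun _ => s, fun _ => t, ![p'.2, q'.2], rfl, rfl, h1,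
        fun i => i.elim0, h3, fun i => ?_⟩
      refine Fin.cases ?_ (fun j => j.elim0) i
      exact h2
  | step p' q' x₁ s t y₂ h1 h2 _ ih =>
      obtain ⟨n, y, u, u', σ, hσ0, hσl, hfirst, hmid, hlast, hmul⟩ := ih
      refine ⟨n + 1, Fin.cons x₁ y, Fin.cons s u, Fin.cons t u', Fin.cons p'.2 σ,
        rfl, ?_, ?_, ?_, ?_, ?_⟩
      · rw [show (Fin.last (n + 2)) = (Fin.last (n + 1)).succ from (Fin.succ_last _).symm,
          Fin.cons_succ]; exact hσl
      · simpa using h1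
      · intro i
        refine Fin.cases ?_ (fun j => ?_) i
        · simpa using hfirst
        · simpa only [← Fin.succ_castSucc, Fin.cons_succ] using hmid j
      · rw [show (Fin.last (n + 1)) = (Fin.last n).succ from (Fin.succ_last _).symm,
          Fin.cons_succ, Fin.cons_succ]
        exact hlast
      · intro i
        refine Fin.cases ?_ (fun j => ?_) i
        · simpa [hσ0] using h2
        · simpa only [← Fin.succ_castSucc, Fin.cons_succ] using hmul j

/-- Rebuild a `TLe` derivation from a `Fin`-indexed scheme. -/
theorem TLe.rebuild : ∀ (n : ℕ) (y : Fin (n + 1) → X) (u u' : Fin (n + 1) → U)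
    (σ : Fin (n + 2) → Y) (a a' : X),
    leX a (aX (y 0) (u 0)) →
    (∀ i : Fin n, leX (aX (y i.castSucc) (u' i.castSucc)) (aX (y i.succ) (u i.succ))) →
    leX (aX (y (Fin.last n)) (u' (Fin.last n))) a' →
    (∀ i : Fin (n + 1), leY (aY (u i) (σ i.castSucc)) (aY (u' i) (σ i.succ))) →
    TLe leX leY aX aY (a, σ 0) (a', σ (Fin.last (n + 1))) := by
  intro n
  induction n with
  | zero =>
      intro y u u' σ a a' hfirst _ hlast hmul
      exact .base _ _ (y 0) (u 0) (u' 0) hfirst (hmul 0) hlast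
  | succ n ih =>
      intro y u u' σ a a' hfirst hmid hlast hmul
      refine .step _ _ (y 0) (u 0) (u' 0) (σ 1) hfirst ?_ ?_
      · simpa using hmul 0
      · have := ih (fun i => y i.succ) (fun i => u i.succ) (fun i => u' i.succ)
          (fun i => σ i.succ) (aX (y 0) (u' 0)) a'
          (by simpa using hmid 0)
          (fun i => by simpa only [Fin.succ_castSucc] using hmid i.succ)
          (by simpa only [Fin.succ_last] using hlast)
          (fun i => by simpa only [Fin.succ_castSucc] using hmul i.succ)
        simpa only [Fin.succ_last, Fin.succ_zero_eq_one] using this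
end TLeAux
section TLeAux2

variable {U X Y : Type*} {leX : X → X → Prop} {leY : Y → Y → Prop}
  {aX : X → U → X} {aY : U → Y → Y}

theorem TEquiv.equivalence' (htrans : ∀ (a b c : X), leX a b → leX b c → leX a c)
    (one : U) (hone : ∀ a : X, aX a one = a)
    (hreflX : ∀ a : X, leX a a) (hreflY : ∀ b : Y, leY (aY one b) (aY one b)) :
    Equivalence (TEquiv leX leY aX aY) where
  refl p := ⟨TLe.refl' one hone hreflX hreflY p, TLe.refl' one hone hreflX hreflY p⟩
  symm h := ⟨h.2, h.1⟩
  trans h1 h2 := ⟨TLe.trans' htrans h1.1 h2.1, TLe.trans' htrans h2.2 h1.2⟩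

theorem quotLe_mk_iff (heq : Equivalence (TEquiv leX leY aX aY))
    (htrans : ∀ (a b c : X), leX a b → leX b c → leX a c) (p q : X × Y) :
    QuotLe (TEquiv leX leY aX aY) (TLe leX leY aX aY) (Quot.mk _ p) (Quot.mk _ q) ↔
      TLe leX leY aX aY p q := by
  constructor
  · rintro ⟨p', q', hp, hq, h⟩
    have hp' : TEquiv leX leY aX aY p' p := heq.eqvGen_iff.mp (Quot.eqvGen_exact hp)
    have hq' : TEquiv leX leY aX aY q' q := heq.eqvGen_iff.mp (Quot.eqvGen_exact hq)
    exact TLe.trans' htrans (TLe.trans' htrans hp'.2 h) hq'.1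
  · intro h
    exact ⟨p, q, rfl, rfl, h⟩

end TLeAux2

section TLeMap

variable {U X Y Z : Type*} {leX : X → X → Prop} {leX' : Y → Y → Prop} {leS : Z → Z → Prop}
  {aX : X → U → X} {aY : Y → U → Y} {aS : U → Z → Z}

theorem TLe.map (f : X → Y) (hfe : ∀ x u, f (aX x u) = aY (f x) u)
    (hmono : ∀ {a b : X}, leX a b → leX' (f a) (f b))
    {p q : X × Z} (h : TLe leX leS (fun x u => aX x u) aS p q) :
    TLe leX' leS (fun y u => aY y u) aS (f p.1, p.2) (f q.1, q.2) := by
  induction h with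
  | base p' q' x₁ s t h1 h2 h3 =>
      exact .base (f p'.1, p'.2) (f q'.1, q'.2) (f x₁) s t
        (by show leX' (f p'.1) (aY (f x₁) s); rw [← hfe]; exact hmono h1) h2
        (by show leX' (aY (f x₁) t) (f q'.1); rw [← hfe]; exact hmono h3)
  | step p' q' x₁ s t y₂ h1 h2 _ ih =>
      refine .step (f p'.1, p'.2) (f q'.1, q'.2) (f x₁) s t y₂
        (by show leX' (f p'.1) (aY (f x₁) s); rw [← hfe]; exact hmono h1) h2 ?_
      have : aY (f x₁) t = f (aX x₁ t) := (hfe _ _).symm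
      rw [this]
      exact ih

end TLeMap
/-- if `f : X → Y` is a right pounitary `U`-poset morphism which is an order
embedding, then `f ⊗ 1 : X ⊗_U S → Y ⊗_U S` is an order embedding. -/
theorem stmt_17 {S X Y : Type u} [Monoid S] [PartialOrder S] (hS : IsPomonoid S)
    (U : Submonoid S) [PartialOrder X] [PartialOrder Y]
    (aX : X → ↥U → X) (aY : Y → ↥U → Y)
    (hX : IsRightSPoset ↥U X aX) (hY : IsRightSPoset ↥U Y aY)
    (f : X → Y) (hfe : ∀ x u, f (aX x u) = aY (f x) u)
    (hemb : ∀ x x', x ≤ x' ↔ f x ≤ f x')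
    (hrpu : ∀ (n : ℕ) (y : Fin (n + 1) → Y) (u u' : Fin (n + 1) → ↥U) (x x' : X),
      f x ≤ aY (y 0) (u 0) →
      (∀ i : Fin n, aY (y i.castSucc) (u' i.castSucc) ≤ aY (y i.succ) (u i.succ)) →
      aY (y (Fin.last n)) (u' (Fin.last n)) ≤ f x' →
      ∀ i, y i ∈ Set.range f)
    (x x' : X) (s s' : S) :
    QuotLe (TEquiv (· ≤ ·) (· ≤ ·) aX (fun (u : ↥U) (t : S) => (u : S) * t))
        (TLe (· ≤ ·) (· ≤ ·) aX (fun (u : ↥U) (t : S) => (u : S) * t))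
        (Quot.mk _ (x, s)) (Quot.mk _ (x', s')) ↔
      QuotLe (TEquiv (· ≤ ·) (· ≤ ·) aY (fun (u : ↥U) (t : S) => (u : S) * t))
        (TLe (· ≤ ·) (· ≤ ·) aY (fun (u : ↥U) (t : S) => (u : S) * t))
        (Quot.mk _ (f x, s)) (Quot.mk _ (f x', s')) := by

  have htX : ∀ (a b c : X), a ≤ b → b ≤ c → a ≤ c := fun _ _ _ h1 h2 => h1.trans h2
  have htY : ∀ (a b c : Y), a ≤ b → b ≤ c → a ≤ c := fun _ _ _ h1 h2 => h1.trans h2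
  have eqX : Equivalence (TEquiv (· ≤ ·) (· ≤ ·) aX (fun (u : ↥U) (t : S) => (u : S) * t)) :=
    TEquiv.equivalence' htX 1 hX.act_one (fun a => le_refl a) (fun b => le_refl _)
  have eqY : Equivalence (TEquiv (· ≤ ·) (· ≤ ·) aY (fun (u : ↥U) (t : S) => (u : S) * t)) :=
    TEquiv.equivalence' htY 1 hY.act_one (fun a => le_refl a) (fun b => le_refl _)
  rw [quotLe_mk_iff eqX htX, quotLe_mk_iff eqY htY]
  constructor
  · intro h
    exact TLe.map f hfe (fun hab => (hemb _ _).mp hab) h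
  · intro h
    obtain ⟨n, y, u, u', σ, hσ0, hσl, hfirst, hmid, hlast, hmul⟩ := TLe.extract h
    have hrange := hrpu n y u u' x x' hfirst hmid hlast
    choose g hg using hrange
    have h1 : x ≤ aX (g 0) (u 0) := (hemb _ _).mpr (by rw [hfe, hg]; exact hfirst)
    have h2 : ∀ i : Fin n, aX (g i.castSucc) (u' i.castSucc) ≤ aX (g i.succ) (u i.succ) :=
      fun i => (hemb _ _).mpr (by rw [hfe, hfe, hg, hg]; exact hmid i)
    have h3 : aX (g (Fin.last n)) (u' (Fin.last n)) ≤ x' :=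
      (hemb _ _).mpr (by rw [hfe, hg]; exact hlast)
    have hre := TLe.rebuild (leX := (· ≤ ·)) (leY := (· ≤ ·)) (aX := aX)
      (aY := fun (u : ↥U) (t : S) => (u : S) * t) n g u u' σ x x' h1 h2 h3 hmul
    rw [hσ0, hσl] at hre
    exact hre
end

section
/- Let [U; S₁, S₂] be a commutative pomonoid amalgam such that U has the poextension property and is convex in both S₁ and S₂. Then the amalgam is strongly poembeddable: the canonical maps λᵢ : Sᵢ → S₁ ⊗_U S₂ (λ₁(s₁) = s₁ ⊗ 1, λ₂(s₂) = 1 ⊗ s₂) are order embeddings and λ₁(S₁) ∩ λ₂(S₂) = λ₁(U). -/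
/-!
On representatives, the order of `X ⊗_U Y` is given by the schemes `TLe`; it is transitive,
and a balanced map `X → Y → P`, monotone in each variable, is monotone along it. Taking
`Y = U`, evaluation identifies `X ⊗_U U` with `X`, so the poextension property of `U` in `S`
says exactly that `x ⊗ 1 ≤ x' ⊗ 1` in `X ⊗_U S` forces `x ≤ x'` (and symmetrically with
`X = U`). For `X = S₁` and `Y = S₂` this makes `λ₁` and `λ₂` order embeddings.

For `λ₁(S₁) ∩ λ₂(S₂) = λ₁(U)`, glue two copies of `S₁` into one right `U`-poset in which the
lower copy lies below the upper one only through elements of `φ₁(U)`. If `s ⊗ 1 = 1 ⊗ t`, the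
schemes for `s ⊗ 1 ≤ 1 ⊗ t` (in the lower copy) and `1 ⊗ t ≤ s ⊗ 1` (in the upper copy) join at
`1 = φ₁ 1` into `lower s ⊗ 1 ≤ upper s ⊗ 1`, so `lower s ≤ upper s`, i.e. `s ≤ φ₁ u ≤ s` for
some `u`. Then `1 ⊗ t = φ₁ u ⊗ 1 = 1 ⊗ φ₂ u`, and `t = φ₂ u` because `λ₂` is an embedding.
-/

universe u v

/-- `U` has the poextension property in `Sᵢ` (along the order-embedding `φ : U →* Sᵢ`): for
every right `U`-poset `X` and left `U`-poset `Y` the canonical map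
`X ⊗_U Y → X ⊗_U Sᵢ ⊗_U Y`, `x ⊗ y ↦ x ⊗ 1 ⊗ y`, is an order embedding. -/
def HasPoextension {U Si : Type u} [Monoid U] [Monoid Si] [PartialOrder U] [PartialOrder Si]
    (φ : U →* Si) : Prop :=
  ∀ (X Y : Type u) [PartialOrder X] [PartialOrder Y]
    (aX : X → U → X) (aY : U → Y → Y),
    IsRightSPoset U X aX → IsLeftSPoset U Y aY →
    ∀ (x x' : X) (y y' : Y),
      QuotLe
          (TEquiv (TLe (· ≤ ·) (· ≤ ·) aX (fun (u : U) (s : Si) => φ u * s))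
            (· ≤ ·) (fun (p : X × Si) (u : U) => (p.1, p.2 * φ u)) aY)
          (TLe (TLe (· ≤ ·) (· ≤ ·) aX (fun (u : U) (s : Si) => φ u * s))
            (· ≤ ·) (fun (p : X × Si) (u : U) => (p.1, p.2 * φ u)) aY)
          (Quot.mk _ ((x, (1 : Si)), y)) (Quot.mk _ ((x', (1 : Si)), y')) ↔
        QuotLe (TEquiv (· ≤ ·) (· ≤ ·) aX aY) (TLe (· ≤ ·) (· ≤ ·) aX aY)
          (Quot.mk _ (x, y)) (Quot.mk _ (x', y'))

namespace TLe

section Order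

variable {U X Y : Type*} [Preorder X] [Preorder Y] {aX : X → U → X} {aY : U → Y → Y}

theorem of_le [Monoid U] (haX : ∀ x, aX x 1 = x) (haY : ∀ y, aY 1 y = y) {p q : X × Y}
    (h₁ : p.1 ≤ q.1) (h₂ : p.2 ≤ q.2) : TLe (· ≤ ·) (· ≤ ·) aX aY p q :=
  .base p q q.1 1 1 (by rwa [haX]) (by rwa [haY, haY]) (by rw [haX])

theorem of_fst_le {x : X} {q r : X × Y} (hx : x ≤ q.1) (h : TLe (· ≤ ·) (· ≤ ·) aX aY q r) :
    TLe (· ≤ ·) (· ≤ ·) aX aY (x, q.2) r := by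
  cases h with
  | base _ _ x₁ s t h₁ h₂ h₃ => exact .base _ _ x₁ s t (hx.trans h₁) h₂ h₃
  | step _ _ x₁ s t y₂ h₁ h₂ h₃ => exact .step _ _ x₁ s t y₂ (hx.trans h₁) h₂ h₃

theorem trans {p q r : X × Y} (h₁ : TLe (· ≤ ·) (· ≤ ·) aX aY p q)
    (h₂ : TLe (· ≤ ·) (· ≤ ·) aX aY q r) : TLe (· ≤ ·) (· ≤ ·) aX aY p r := by
  induction h₁ with
  | base p q x₁ s t h₁ h₂' h₃ => exact .step _ _ x₁ s t q.2 h₁ h₂' (of_fst_le h₃ h₂)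
  | step p q x₁ s t y₂ h₁ h₂' _ ih => exact .step _ _ x₁ s t y₂ h₁ h₂' (ih h₂)

theorem le_of_balanced {P : Type*} [Preorder P] (f : X → Y → P)
    (hf₁ : ∀ y, Monotone (f · y)) (hf₂ : ∀ x, Monotone (f x))
    (hbal : ∀ x u y, f (aX x u) y = f x (aY u y)) {p q : X × Y}
    (h : TLe (· ≤ ·) (· ≤ ·) aX aY p q) : f p.1 p.2 ≤ f q.1 q.2 := by
  induction h with
  | base p q x₁ s t h₁ h₂ h₃ =>
    calc f p.1 p.2 ≤ f (aX x₁ s) p.2 := hf₁ _ h₁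
      _ = f x₁ (aY s p.2) := hbal ..
      _ ≤ f x₁ (aY t q.2) := hf₂ _ h₂
      _ = f (aX x₁ t) q.2 := (hbal ..).symm
      _ ≤ f q.1 q.2 := hf₁ _ h₃
  | step p q x₁ s t y₂ h₁ h₂ _ ih =>
    calc f p.1 p.2 ≤ f (aX x₁ s) p.2 := hf₁ _ h₁
      _ = f x₁ (aY s p.2) := hbal ..
      _ ≤ f x₁ (aY t y₂) := hf₂ _ h₂
      _ = f (aX x₁ t) y₂ := (hbal ..).symm
      _ ≤ f q.1 q.2 := ih

theorem equivalence_tEquiv [Monoid U] (haX : ∀ x, aX x 1 = x) (haY : ∀ y, aY 1 y = y) :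
    Equivalence (TEquiv (· ≤ ·) (· ≤ ·) aX aY) where
  refl _ := ⟨of_le haX haY le_rfl le_rfl, of_le haX haY le_rfl le_rfl⟩
  symm h := ⟨h.2, h.1⟩
  trans h₁ h₂ := ⟨h₁.1.trans h₂.1, h₂.2.trans h₁.2⟩

theorem tEquiv_of_mk_eq_mk [Monoid U] (haX : ∀ x, aX x 1 = x) (haY : ∀ y, aY 1 y = y)
    {p q : X × Y} (h : Quot.mk (TEquiv (· ≤ ·) (· ≤ ·) aX aY) p = Quot.mk _ q) :
    TEquiv (· ≤ ·) (· ≤ ·) aX aY p q :=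
  (equivalence_tEquiv haX haY).eqvGen_iff.mp (Quot.eqvGen_exact h)

theorem quotLe_mk_iff [Monoid U] (haX : ∀ x, aX x 1 = x) (haY : ∀ y, aY 1 y = y)
    {p q : X × Y} :
    QuotLe (TEquiv (· ≤ ·) (· ≤ ·) aX aY) (TLe (· ≤ ·) (· ≤ ·) aX aY)
      (Quot.mk _ p) (Quot.mk _ q) ↔ TLe (· ≤ ·) (· ≤ ·) aX aY p q := by
  refine ⟨?_, fun h => ⟨p, q, rfl, rfl, h⟩⟩
  rintro ⟨p', q', hp, hq, h⟩
  exact ((tEquiv_of_mk_eq_mk haX haY hp).2.trans h).trans (tEquiv_of_mk_eq_mk haX haY hq).1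

end Order

theorem map_fst {U X X' Y : Type*} {leX : X → X → Prop} {leX' : X' → X' → Prop}
    {leY : Y → Y → Prop} {aX : X → U → X} {aX' : X' → U → X'} {aY : U → Y → Y} (f : X → X')
    (hf : ∀ x y, leX x y → leX' (f x) (f y)) (hfa : ∀ x u, f (aX x u) = aX' (f x) u)
    {p q : X × Y} (h : TLe leX leY aX aY p q) :
    TLe leX' leY aX' aY (f p.1, p.2) (f q.1, q.2) := by
  induction h with
  | base p q x₁ s t h₁ h₂ h₃ =>
    exact .base _ _ (f x₁) s t (hfa x₁ s ▸ hf _ _ h₁) h₂ (hfa x₁ t ▸ hf _ _ h₃)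
  | step p q x₁ s t y₂ h₁ h₂ _ ih =>
    exact .step _ _ (f x₁) s t y₂ (hfa x₁ s ▸ hf _ _ h₁) h₂ (hfa x₁ t ▸ ih)

end TLe

namespace IsPomonoid

variable {U S : Type*} [Monoid U] [Monoid S] [PartialOrder U] [PartialOrder S]

theorem isRightSPoset (hS : IsPomonoid S) {φ : U →* S} (hφ : Monotone φ) :
    IsRightSPoset U S (fun s u => s * φ u) where
  act_one s := by rw [map_one, mul_one]
  act_mul s u v := by rw [map_mul, mul_assoc]
  mono_act u h := (hS h (φ u)).1
  act_mono s _ _ h := (hS (hφ h) s).2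

theorem isLeftSPoset (hS : IsPomonoid S) {φ : U →* S} (hφ : Monotone φ) :
    IsLeftSPoset U S (fun u s => φ u * s) where
  one_act s := by rw [map_one, one_mul]
  mul_act u v s := by rw [map_mul, mul_assoc]
  mono_act u h := (hS h (φ u)).2
  act_mono s _ _ h := (hS (hφ h) s).1

end IsPomonoid

namespace HasPoextension

variable {U S : Type u} [Monoid U] [Monoid S] [PartialOrder U] [PartialOrder S] {φ : U →* S}

theorem le_of_tLe_tmul_one (hpe : HasPoextension φ) (hU : IsPomonoid U) {X : Type u}
    [PartialOrder X] {aX : X → U → X} (hX : IsRightSPoset U X aX) {x x' : X}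
    (h : TLe (· ≤ ·) (· ≤ ·) aX (fun u s => φ u * s) (x, 1) (x', 1)) : x ≤ x' := by
  have hUU := hU.isLeftSPoset (φ := MonoidHom.id U) monotone_id
  have hunit : ∀ s : S, φ 1 * s = s := by simp
  have h' : TLe _ (· ≤ ·) (fun (p : X × S) (u : U) => (p.1, p.2 * φ u)) (· * ·)
      ((x, 1), 1) ((x', 1), 1) :=
    .base _ _ (x', 1) 1 1 (by simpa using h) le_rfl
      (by simpa using TLe.of_le hX.act_one hunit le_rfl le_rfl)
  have hXU := (TLe.quotLe_mk_iff hX.act_one one_mul).mp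
    ((hpe X U aX (· * ·) hX hUU x x' 1 1).mp ⟨_, _, rfl, rfl, h'⟩)
  simpa only [hX.act_one] using TLe.le_of_balanced aX (fun u _ _ h => hX.mono_act u h)
    (fun x _ _ h => hX.act_mono x h) (fun x u v => (hX.act_mul x u v).symm) hXU

theorem le_of_tLe_one_tmul (hpe : HasPoextension φ) (hU : IsPomonoid U) {Y : Type u}
    [PartialOrder Y] {aY : U → Y → Y} (hY : IsLeftSPoset U Y aY) {y y' : Y}
    (h : TLe (· ≤ ·) (· ≤ ·) (fun s u => s * φ u) aY (1, y) (1, y')) : y ≤ y' := by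
  have hUU := hU.isRightSPoset (φ := MonoidHom.id U) monotone_id
  have hunit : ∀ s : S, φ 1 * s = s := by simp
  have h' := TLe.map_fst (aX' := fun (p : U × S) (u : U) => (p.1, p.2 * φ u))
    (fun s : S => ((1 : U), s))
    (fun _ _ hs => TLe.of_le (aY := fun u s => φ u * s) mul_one hunit le_rfl hs)
    (fun _ _ => rfl) h
  have hUY := (TLe.quotLe_mk_iff mul_one hY.one_act).mp
    ((hpe U Y (· * ·) aY hUU hY 1 1 y y').mp ⟨_, _, rfl, rfl, h'⟩)
  simpa only [hY.one_act] using TLe.le_of_balanced aY (fun y _ _ h => hY.act_mono y h)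
    (fun u _ _ h => hY.mono_act u h) (fun u v y => hY.mul_act u v y) hUY

end HasPoextension

inductive Glued {U : Type*} {S : Type u} [Monoid U] [Monoid S] (φ : U →* S) : Type u
  | lower : S → Glued φ
  | upper : S → Glued φ

namespace Glued

variable {U : Type*} {S : Type u} [Monoid U] [Monoid S] [PartialOrder S] {φ : U →* S}

def le : Glued φ → Glued φ → Prop
  | lower x, lower y => x ≤ y
  | upper x, upper y => x ≤ y
  | lower x, upper y => ∃ u, x ≤ φ u ∧ φ u ≤ y
  | upper _, lower _ => False

instance : PartialOrder (Glued φ) where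
  le := le
  le_refl := by rintro (x | x) <;> exact le_refl x
  le_trans := by
    rintro (x | x) (y | y) (z | z) h₁ h₂
    · exact le_trans (α := S) h₁ h₂
    · obtain ⟨u, hyu, huz⟩ := h₂; exact ⟨u, le_trans (α := S) h₁ hyu, huz⟩
    · exact h₂.elim
    · obtain ⟨u, hxu, huy⟩ := h₁; exact ⟨u, hxu, le_trans (α := S) huy h₂⟩
    · exact h₁.elim
    · exact h₁.elim
    · exact h₂.elim
    · exact le_trans (α := S) h₁ h₂
  le_antisymm := by
    rintro (x | x) (y | y) h₁ h₂
    · exact congrArg lower (le_antisymm (α := S) h₁ h₂)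
    · exact h₂.elim
    · exact h₁.elim
    · exact congrArg upper (le_antisymm (α := S) h₁ h₂)

theorem lower_le_upper_iff {x y : S} :
    lower x ≤ (upper y : Glued φ) ↔ ∃ u, x ≤ φ u ∧ φ u ≤ y := Iff.rfl

def act : Glued φ → U → Glued φ
  | lower x, u => lower (x * φ u)
  | upper x, u => upper (x * φ u)

theorem isRightSPoset [PartialOrder U] (hS : IsPomonoid S) (hφ : Monotone φ) :
    IsRightSPoset U (Glued φ) act where
  act_one := by rintro (x | x) <;> simp [act]
  act_mul := by rintro (x | x) u v <;> simp [act, mul_assoc]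
  mono_act := by
    rintro (x | x) (y | y) v h
    · exact (hS h (φ v)).1
    · obtain ⟨u, hxu, huy⟩ := h
      exact ⟨u * v, by rw [map_mul]; exact (hS hxu _).1, by rw [map_mul]; exact (hS huy _).1⟩
    · exact h.elim
    · exact (hS h (φ v)).1
  act_mono := by
    rintro (x | x) u v h
    · exact (hS (hφ h) x).2
    · exact (hS (hφ h) x).2

end Glued

section Amalgam

variable {U S₁ S₂ : Type u} [Monoid U] [Monoid S₁] [Monoid S₂]
  [PartialOrder S₁] [PartialOrder S₂] {φ₁ : U →* S₁} {φ₂ : U →* S₂}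

theorem tLe_map_tmul_one_one_tmul (u : U) :
    TLe (· ≤ ·) (· ≤ ·) (fun (s : S₁) (u : U) => s * φ₁ u) (fun (u : U) (t : S₂) => φ₂ u * t)
      (φ₁ u, 1) (1, φ₂ u) :=
  .base _ _ 1 u 1 (by simp) (by simp) (by simp)

theorem tLe_one_tmul_map_tmul_one (u : U) :
    TLe (· ≤ ·) (· ≤ ·) (fun (s : S₁) (u : U) => s * φ₁ u) (fun (u : U) (t : S₂) => φ₂ u * t)
      (1, φ₂ u) (φ₁ u, 1) :=
  .base _ _ 1 1 u (by simp) (by simp) (by simp)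

theorem HasPoextension.mem_range_of_tLe_of_tLe [PartialOrder U] (hpe₂ : HasPoextension φ₂)
    (hU : IsPomonoid U) (hS₁ : IsPomonoid S₁) (hφ₁ : Monotone φ₁) {s : S₁} {t : S₂}
    (h₁ : TLe (· ≤ ·) (· ≤ ·) (fun (s : S₁) (u : U) => s * φ₁ u)
      (fun (u : U) (t : S₂) => φ₂ u * t) (s, 1) (1, t))
    (h₂ : TLe (· ≤ ·) (· ≤ ·) (fun (s : S₁) (u : U) => s * φ₁ u)
      (fun (u : U) (t : S₂) => φ₂ u * t) (1, t) (s, 1)) :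
    s ∈ Set.range φ₁ := by
  have hS₂ : ∀ t : S₂, φ₂ 1 * t = t := by simp
  have hlower := TLe.map_fst (leX' := (· ≤ ·)) (aX' := Glued.act) (Glued.lower (φ := φ₁))
    (fun _ _ h => h) (fun _ _ => rfl) h₁
  have hupper := TLe.map_fst (leX' := (· ≤ ·)) (aX' := Glued.act) (Glued.upper (φ := φ₁))
    (fun _ _ h => h) (fun _ _ => rfl) h₂
  have hcross : TLe (· ≤ ·) (· ≤ ·) Glued.act (fun (u : U) (t : S₂) => φ₂ u * t)
      (Glued.lower (φ := φ₁) 1, t) (Glued.upper 1, t) := by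
    refine TLe.of_le (Glued.isRightSPoset hS₁ hφ₁).act_one hS₂ ?_ le_rfl
    exact Glued.lower_le_upper_iff.mpr ⟨1, by simp, by simp⟩
  obtain ⟨u, hsu, hus⟩ := Glued.lower_le_upper_iff.mp <|
    hpe₂.le_of_tLe_tmul_one hU (Glued.isRightSPoset hS₁ hφ₁) ((hlower.trans hcross).trans hupper)
  exact ⟨u, le_antisymm hus hsu⟩

end Amalgam

theorem stmt_18_general {U S₁ S₂ : Type u} [CommMonoid U] [CommMonoid S₁] [CommMonoid S₂]
    [PartialOrder U] [PartialOrder S₁] [PartialOrder S₂]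
    (hU : IsPomonoid U) (hS₁ : IsPomonoid S₁) (hS₂ : IsPomonoid S₂)
    (φ₁ : U →* S₁) (φ₂ : U →* S₂)
    (hφ₁ : ∀ u u' : U, u ≤ u' ↔ φ₁ u ≤ φ₁ u') (hφ₂ : ∀ u u' : U, u ≤ u' ↔ φ₂ u ≤ φ₂ u')
    (hpe₁ : HasPoextension φ₁) (hpe₂ : HasPoextension φ₂) :
    -- λ₁ is an order embedding into S₁ ⊗_U S₂
    (∀ s s' : S₁,
      QuotLe (TEquiv (· ≤ ·) (· ≤ ·) (fun (s : S₁) (u : U) => s * φ₁ u)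
          (fun (u : U) (t : S₂) => φ₂ u * t))
        (TLe (· ≤ ·) (· ≤ ·) (fun (s : S₁) (u : U) => s * φ₁ u)
          (fun (u : U) (t : S₂) => φ₂ u * t))
        (Quot.mk _ (s, (1 : S₂))) (Quot.mk _ (s', (1 : S₂))) ↔ s ≤ s') ∧
    -- λ₂ is an order embedding into S₁ ⊗_U S₂
    (∀ t t' : S₂,
      QuotLe (TEquiv (· ≤ ·) (· ≤ ·) (fun (s : S₁) (u : U) => s * φ₁ u)
          (fun (u : U) (t : S₂) => φ₂ u * t))
        (TLe (· ≤ ·) (· ≤ ·) (fun (s : S₁) (u : U) => s * φ₁ u)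
          (fun (u : U) (t : S₂) => φ₂ u * t))
        (Quot.mk _ ((1 : S₁), t)) (Quot.mk _ ((1 : S₁), t')) ↔ t ≤ t') ∧
    -- λ₁ and λ₂ agree on U
    (∀ u : U,
      (Quot.mk (TEquiv (· ≤ ·) (· ≤ ·) (fun (s : S₁) (u : U) => s * φ₁ u)
          (fun (u : U) (t : S₂) => φ₂ u * t)) (φ₁ u, (1 : S₂))) =
        Quot.mk _ ((1 : S₁), φ₂ u)) ∧
    -- the amalgam is strongly poembeddable: λ₁(S₁) ∩ λ₂(S₂) = λ₁(U)
    (∀ (s : S₁) (t : S₂),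
      (Quot.mk (TEquiv (· ≤ ·) (· ≤ ·) (fun (s : S₁) (u : U) => s * φ₁ u)
          (fun (u : U) (t : S₂) => φ₂ u * t)) (s, (1 : S₂))) =
        Quot.mk _ ((1 : S₁), t) →
      ∃ u : U, s = φ₁ u ∧ t = φ₂ u) := by
  have hφ₁m : Monotone φ₁ := fun u u' h => (hφ₁ u u').mp h
  have hφ₂m : Monotone φ₂ := fun u u' h => (hφ₂ u u').mp h
  have unit₁ : ∀ s : S₁, s * φ₁ 1 = s := by simp
  have unit₂ : ∀ t : S₂, φ₂ 1 * t = t := by simp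
  have emb₁ := fun {s s' : S₁} => hpe₂.le_of_tLe_tmul_one (x := s) (x' := s') hU
    (hS₁.isRightSPoset hφ₁m)
  have emb₂ := fun {t t' : S₂} => hpe₁.le_of_tLe_one_tmul (y := t) (y' := t') hU
    (hS₂.isLeftSPoset hφ₂m)
  refine ⟨fun s s' => ?_, fun t t' => ?_, fun u => ?_, fun s t h => ?_⟩
  · rw [TLe.quotLe_mk_iff unit₁ unit₂]
    exact ⟨emb₁, fun h => TLe.of_le unit₁ unit₂ h le_rfl⟩
  · rw [TLe.quotLe_mk_iff unit₁ unit₂]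
    exact ⟨emb₂, fun h => TLe.of_le unit₁ unit₂ le_rfl h⟩
  · exact Quot.sound ⟨tLe_map_tmul_one_one_tmul u, tLe_one_tmul_map_tmul_one u⟩
  · obtain ⟨h₁, h₂⟩ := TLe.tEquiv_of_mk_eq_mk unit₁ unit₂ h
    obtain ⟨u, rfl⟩ := hpe₂.mem_range_of_tLe_of_tLe hU hS₁ hφ₁m h₁ h₂
    exact ⟨u, rfl, le_antisymm (emb₂ (h₂.trans (tLe_map_tmul_one_one_tmul u)))
      (emb₂ ((tLe_one_tmul_map_tmul_one u).trans h₁))⟩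

/-- a commutative pomonoid amalgam [U; S₁, S₂] in which U has the poextension
property and is convex in both S₁ and S₂ is strongly poembeddable in its amalgamated free
product S₁ ⊗_U S₂: the canonical maps λ₁(s) = s ⊗ 1 and λ₂(s) = 1 ⊗ s are order embeddings,
they agree on U, and λ₁(S₁) ∩ λ₂(S₂) = λ₁(U). -/
theorem stmt_18 {U S₁ S₂ : Type u} [CommMonoid U] [CommMonoid S₁] [CommMonoid S₂]
    [PartialOrder U] [PartialOrder S₁] [PartialOrder S₂]
    (hU : IsPomonoid U) (hS₁ : IsPomonoid S₁) (hS₂ : IsPomonoid S₂)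
    (φ₁ : U →* S₁) (φ₂ : U →* S₂)
    (hφ₁ : ∀ u u' : U, u ≤ u' ↔ φ₁ u ≤ φ₁ u') (hφ₂ : ∀ u u' : U, u ≤ u' ↔ φ₂ u ≤ φ₂ u')
    (hpe₁ : HasPoextension φ₁) (hpe₂ : HasPoextension φ₂)
    (hconv₁ : ∀ (u v : U) (s : S₁), φ₁ u ≤ s → s ≤ φ₁ v → s ∈ Set.range φ₁)
    (hconv₂ : ∀ (u v : U) (s : S₂), φ₂ u ≤ s → s ≤ φ₂ v → s ∈ Set.range φ₂) :
    -- λ₁ is an order embedding into S₁ ⊗_U S₂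
    (∀ s s' : S₁,
      QuotLe (TEquiv (· ≤ ·) (· ≤ ·) (fun (s : S₁) (u : U) => s * φ₁ u)
          (fun (u : U) (t : S₂) => φ₂ u * t))
        (TLe (· ≤ ·) (· ≤ ·) (fun (s : S₁) (u : U) => s * φ₁ u)
          (fun (u : U) (t : S₂) => φ₂ u * t))
        (Quot.mk _ (s, (1 : S₂))) (Quot.mk _ (s', (1 : S₂))) ↔ s ≤ s') ∧
    -- λ₂ is an order embedding into S₁ ⊗_U S₂
    (∀ t t' : S₂,
      QuotLe (TEquiv (· ≤ ·) (· ≤ ·) (fun (s : S₁) (u : U) => s * φ₁ u)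
          (fun (u : U) (t : S₂) => φ₂ u * t))
        (TLe (· ≤ ·) (· ≤ ·) (fun (s : S₁) (u : U) => s * φ₁ u)
          (fun (u : U) (t : S₂) => φ₂ u * t))
        (Quot.mk _ ((1 : S₁), t)) (Quot.mk _ ((1 : S₁), t')) ↔ t ≤ t') ∧
    -- λ₁ and λ₂ agree on U
    (∀ u : U,
      (Quot.mk (TEquiv (· ≤ ·) (· ≤ ·) (fun (s : S₁) (u : U) => s * φ₁ u)
          (fun (u : U) (t : S₂) => φ₂ u * t)) (φ₁ u, (1 : S₂))) =
        Quot.mk _ ((1 : S₁), φ₂ u)) ∧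
    -- the amalgam is strongly poembeddable: λ₁(S₁) ∩ λ₂(S₂) = λ₁(U)
    (∀ (s : S₁) (t : S₂),
      (Quot.mk (TEquiv (· ≤ ·) (· ≤ ·) (fun (s : S₁) (u : U) => s * φ₁ u)
          (fun (u : U) (t : S₂) => φ₂ u * t)) (s, (1 : S₂))) =
        Quot.mk _ ((1 : S₁), t) →
      ∃ u : U, s = φ₁ u ∧ t = φ₂ u) :=
  stmt_18_general hU hS₁ hS₂ φ₁ φ₂ hφ₁ hφ₂ hpe₁ hpe₂
end
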